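/- arXiv:1708.00067 — 4 statements merged into one kernel-verified Lean document; each statement's English description precedes it below -/
import Mathlib

section
/- For every real m < d there exist constants c, C > 0 depending only on m and d such that for all v₀ ∈ ℝ^d and all r > 0, the average of |v|^{-m} over the ball B_r(v₀) satisfies c·(max{|v₀|, 2r})^{-m} ≤ average ≤ C·(max{|v₀|, 2r})^{-m}. -/
/-!
Write `R = max ‖v₀‖ (2r)`; every point of `B_r(v₀)` has norm at most `2R`. For the lower bound,
`B_r(v₀)` contains a ball of radius `r/3`, hence of a fixed fraction `3^{-d}` of its volume, on
which `‖v‖ ≥ R/6`. For the upper bound, if `2r ≤ ‖v₀‖` then `‖v‖ ≥ R/2` on all of `B_r(v₀)`;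
otherwise `B_r(v₀)` is a subset of `B_{3R/2}(0)`, whose volume is comparable, and by homogeneity
the average of `‖v‖^{-m}` over `B_ρ(0)` is `ρ^{-m}` times its average over the unit ball, which
is finite because `m < d`.
-/

open MeasureTheory Metric Set Real Module
open scoped ENNReal

lemma min_rpow_le_rpow_of_mem_Icc {a b x : ℝ} (p : ℝ) (ha : 0 < a) (hx : x ∈ Icc a b) :
    min (a ^ p) (b ^ p) ≤ x ^ p := by
  rcases le_total 0 p with hp | hp
  · exact (min_le_left _ _).trans (rpow_le_rpow ha.le hx.1 hp)
  · exact (min_le_right _ _).trans (rpow_le_rpow_of_nonpos (ha.trans_le hx.1) hx.2 hp)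

lemma rpow_le_max_rpow_of_mem_Icc {a b x : ℝ} (p : ℝ) (ha : 0 < a) (hx : x ∈ Icc a b) :
    x ^ p ≤ max (a ^ p) (b ^ p) := by
  rcases le_total 0 p with hp | hp
  · exact (rpow_le_rpow (ha.le.trans hx.1) hx.2 hp).trans (le_max_right _ _)
  · exact (rpow_le_rpow_of_nonpos ha hx.1 hp).trans (le_max_left _ _)

section SetAverage

variable {α : Type*} [MeasurableSpace α] {μ : Measure α} {s t : Set α} {f : α → ℝ}

lemma setAverage_le_of_forall_le {c : ℝ} (hs : MeasurableSet s) (hs₀ : μ s ≠ 0) (hs₁ : μ s ≠ ∞)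
    (hf : IntegrableOn f s μ) (h : ∀ x ∈ s, f x ≤ c) : ⨍ x in s, f x ∂μ ≤ c := by
  rw [← setAverage_const hs₀ hs₁ c, setAverage_eq, setAverage_eq]
  exact smul_le_smul_of_nonneg_left (setIntegral_mono_on hf (integrableOn_const hs₁) hs h)
    (by positivity)

lemma le_setAverage_of_forall_le {c : ℝ} (hs : MeasurableSet s) (hs₀ : μ s ≠ 0) (hs₁ : μ s ≠ ∞)
    (hf : IntegrableOn f s μ) (h : ∀ x ∈ s, c ≤ f x) : c ≤ ⨍ x in s, f x ∂μ := by
  rw [← setAverage_const hs₀ hs₁ c, setAverage_eq, setAverage_eq]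
  exact smul_le_smul_of_nonneg_left (setIntegral_mono_on (integrableOn_const hs₁) hf hs h)
    (by positivity)

lemma setAverage_le_mul_setAverage_of_subset {k : ℝ} (hst : s ⊆ t) (hs₀ : μ s ≠ 0)
    (ht : μ t ≠ ∞) (hf : IntegrableOn f t μ) (hf₀ : 0 ≤ᵐ[μ.restrict t] f)
    (hμ : μ.real t ≤ k * μ.real s) : ⨍ x in s, f x ∂μ ≤ k * ⨍ x in t, f x ∂μ := by
  have hs : 0 < μ.real s := ENNReal.toReal_pos hs₀ (measure_ne_top_of_subset hst ht)
  have ht₀ : 0 < μ.real t := hs.trans_le (measureReal_mono hst ht)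
  have hint_nonneg : 0 ≤ ∫ x in t, f x ∂μ := integral_nonneg_of_ae hf₀
  rw [setAverage_eq, setAverage_eq, smul_eq_mul, smul_eq_mul, ← mul_assoc]
  calc (μ.real s)⁻¹ * ∫ x in s, f x ∂μ ≤ (μ.real s)⁻¹ * ∫ x in t, f x ∂μ :=
        mul_le_mul_of_nonneg_left (setIntegral_mono_set hf hf₀ hst.eventuallyLE) (by positivity)
    _ ≤ k * (μ.real t)⁻¹ * ∫ x in t, f x ∂μ := by
        gcongr
        rw [← div_eq_mul_inv, le_div_iff₀ ht₀, inv_mul_le_iff₀ hs, mul_comm]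
        exact hμ

end SetAverage

lemma norm_le_two_mul_max_of_mem_closedBall {E : Type*} [SeminormedAddCommGroup E] {x v : E}
    {r : ℝ} (hv : v ∈ closedBall x r) : ‖v‖ ≤ 2 * max ‖x‖ (2 * r) := by
  have hv_norm := norm_le_of_mem_closedBall hv
  have hr : 0 ≤ r := dist_nonneg.trans (mem_closedBall.1 hv)
  linarith [le_max_left ‖x‖ (2 * r), le_max_right ‖x‖ (2 * r)]

section Normed

variable {E : Type*} [NormedAddCommGroup E] [NormedSpace ℝ E] [Nontrivial E]

lemma exists_dist_eq_and_max_le_norm (x : E) {a : ℝ} (ha : 0 ≤ a) :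
    ∃ w, dist w x = a ∧ max a ‖x‖ ≤ ‖w‖ := by
  obtain ⟨y, hy⟩ := exists_norm_eq E ha
  have h₁ : 2 * a ≤ ‖x + y‖ + ‖x - y‖ := by
    simpa [← two_smul ℝ y, norm_smul, hy] using norm_sub_le (x + y) (x - y)
  have h₂ : 2 * ‖x‖ ≤ ‖x + y‖ + ‖x - y‖ := by
    simpa [← two_smul ℝ x, norm_smul] using norm_add_le (x + y) (x - y)
  rcases le_total ‖x - y‖ ‖x + y‖ with h | h
  · exact ⟨x + y, by simp [hy], max_le (by linarith) (by linarith)⟩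
  · exact ⟨x - y, by simp [hy], max_le (by linarith) (by linarith)⟩

lemma exists_closedBall_subset_closedBall_forall_le_norm (x : E) {r : ℝ} (hr : 0 < r) :
    ∃ w, closedBall w (r / 3) ⊆ closedBall x r ∧
      ∀ v ∈ closedBall w (r / 3), max ‖x‖ (2 * r) / 6 ≤ ‖v‖ := by
  obtain ⟨w, hw_dist, hw_norm⟩ := exists_dist_eq_and_max_le_norm x (a := 2 * r / 3) (by positivity)
  refine ⟨w, closedBall_subset_closedBall' (by linarith), fun v hv => ?_⟩
  have hv' : ‖w‖ - r / 3 ≤ ‖v‖ := by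
    have := norm_sub_norm_le w v
    rw [← dist_eq_norm, dist_comm] at this
    linarith [mem_closedBall.1 hv]
  rcases le_total ‖x‖ (2 * r) with h | h
  · rw [max_eq_right h]
    linarith [le_max_left (2 * r / 3) ‖x‖]
  · rw [max_eq_left h]
    linarith [le_max_right (2 * r / 3) ‖x‖]

end Normed

section Haar

variable {E : Type*} [NormedAddCommGroup E] [NormedSpace ℝ E] [FiniteDimensional ℝ E]
  [MeasurableSpace E] [BorelSpace E] (μ : Measure E) [μ.IsAddHaarMeasure] {m : ℝ}

lemma integrableOn_closedBall_norm_rpow_neg [Nontrivial E] (hm : m < finrank ℝ E)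
    (x : E) (r : ℝ) : IntegrableOn (fun v => ‖v‖ ^ (-m)) (closedBall x r) μ :=
  (locallyIntegrable_of_norm_le_rpow (C := 1) finrank_pos hm
    (.of_forall fun v => by simp [abs_of_nonneg (rpow_nonneg (norm_nonneg v) _)])
    (measurable_norm.pow_const _).aestronglyMeasurable).integrableOn_isCompact
      (isCompact_closedBall x r)

lemma setAverage_closedBall_zero_norm_rpow {ρ : ℝ} (hρ : 0 < ρ) :
    ⨍ v in closedBall (0 : E) ρ, ‖v‖ ^ (-m) ∂μ
      = ρ ^ (-m) * ⨍ v in closedBall (0 : E) 1, ‖v‖ ^ (-m) ∂μ := by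
  have hρn : ρ ^ finrank ℝ E ≠ 0 := by positivity
  have hscale := Measure.setIntegral_comp_smul_of_pos μ (fun v => ‖v‖ ^ (-m)) (closedBall 0 1) hρ
  simp only [norm_smul, norm_of_nonneg hρ.le, mul_rpow hρ.le (norm_nonneg _),
    _root_.smul_closedBall _ _ zero_le_one, smul_zero, mul_one, integral_const_mul,
    smul_eq_mul] at hscale
  have hint : ∫ v in closedBall (0 : E) ρ, ‖v‖ ^ (-m) ∂μ
      = ρ ^ finrank ℝ E * (ρ ^ (-m) * ∫ v in closedBall (0 : E) 1, ‖v‖ ^ (-m) ∂μ) := by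
    rw [hscale, mul_inv_cancel_left₀ hρn]
  rw [setAverage_eq, setAverage_eq, Measure.addHaar_real_closedBall' μ 0 hρ.le, hint,
    smul_eq_mul, smul_eq_mul, mul_inv]
  field_simp

lemma exists_pos_mul_rpow_le_setAverage_closedBall_norm_rpow [Nontrivial E] (hm : m < finrank ℝ E) :
    ∃ c > 0, ∀ (x : E) (r : ℝ), 0 < r →
      c * max ‖x‖ (2 * r) ^ (-m) ≤ ⨍ v in closedBall x r, ‖v‖ ^ (-m) ∂μ := by
  refine ⟨min (6⁻¹ ^ (-m)) (2 ^ (-m)) / 3 ^ finrank ℝ E, by positivity, fun x r hr => ?_⟩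
  set R := max ‖x‖ (2 * r)
  have hR : 0 < R := lt_max_of_lt_right (by linarith)
  obtain ⟨w, hwx, hw⟩ := exists_closedBall_subset_closedBall_forall_le_norm x hr
  have hnorm : ∀ v ∈ closedBall w (r / 3), ‖v‖ ∈ Icc (6⁻¹ * R) (2 * R) := fun v hv =>
    ⟨by linarith [hw v hv], norm_le_two_mul_max_of_mem_closedBall (hwx hv)⟩
  have hsmall : min (6⁻¹ ^ (-m)) (2 ^ (-m)) * R ^ (-m)
      ≤ ⨍ v in closedBall w (r / 3), ‖v‖ ^ (-m) ∂μ := by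
    rw [min_mul_of_nonneg _ _ (by positivity), ← mul_rpow (by norm_num) hR.le,
      ← mul_rpow (by norm_num) hR.le]
    exact le_setAverage_of_forall_le measurableSet_closedBall
      (measure_closedBall_pos μ w (by positivity)).ne' measure_closedBall_lt_top.ne
      (integrableOn_closedBall_norm_rpow_neg μ hm w _)
      fun v hv => min_rpow_le_rpow_of_mem_Icc _ (by positivity) (hnorm v hv)
  have hcompare : ⨍ v in closedBall w (r / 3), ‖v‖ ^ (-m) ∂μ
      ≤ 3 ^ finrank ℝ E * ⨍ v in closedBall x r, ‖v‖ ^ (-m) ∂μ := by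
    refine setAverage_le_mul_setAverage_of_subset hwx
      (measure_closedBall_pos μ w (by positivity)).ne' measure_closedBall_lt_top.ne
      (integrableOn_closedBall_norm_rpow_neg μ hm x r) (.of_forall fun v => by positivity)
      (le_of_eq ?_)
    rw [Measure.addHaar_real_closedBall' μ x hr.le,
      Measure.addHaar_real_closedBall' μ w (by positivity), div_pow]
    field_simp
  rw [div_mul_eq_mul_div, div_le_iff₀' (by positivity)]
  exact hsmall.trans hcompare

lemma exists_pos_setAverage_closedBall_norm_rpow_le_mul_rpow [Nontrivial E] (hm : m < finrank ℝ E) :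
    ∃ C > 0, ∀ (x : E) (r : ℝ), 0 < r →
      ⨍ v in closedBall x r, ‖v‖ ^ (-m) ∂μ ≤ C * max ‖x‖ (2 * r) ^ (-m) := by
  set A := ⨍ v in closedBall (0 : E) 1, ‖v‖ ^ (-m) ∂μ
  refine ⟨max (max (6⁻¹ ^ (-m)) (2 ^ (-m))) (3 ^ finrank ℝ E * (3 / 2) ^ (-m) * A),
    lt_max_of_lt_left (by positivity), fun x r hr => ?_⟩
  set R := max ‖x‖ (2 * r)
  have hR : 0 < R := lt_max_of_lt_right (by linarith)
  rcases le_total (2 * r) ‖x‖ with h | h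
  · have hnorm : ∀ v ∈ closedBall x r, ‖v‖ ∈ Icc (6⁻¹ * R) (2 * R) := fun v hv => by
      refine ⟨?_, norm_le_two_mul_max_of_mem_closedBall hv⟩
      have := norm_sub_norm_le x v
      rw [← dist_eq_norm, dist_comm] at this
      have hRx : R = ‖x‖ := max_eq_left h
      linarith [mem_closedBall.1 hv]
    calc ⨍ v in closedBall x r, ‖v‖ ^ (-m) ∂μ ≤ max (6⁻¹ ^ (-m)) (2 ^ (-m)) * R ^ (-m) := by
          rw [max_mul_of_nonneg _ _ (by positivity), ← mul_rpow (by norm_num) hR.le,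
            ← mul_rpow (by norm_num) hR.le]
          exact setAverage_le_of_forall_le measurableSet_closedBall
            (measure_closedBall_pos μ x hr).ne' measure_closedBall_lt_top.ne
            (integrableOn_closedBall_norm_rpow_neg μ hm x r)
            fun v hv => rpow_le_max_rpow_of_mem_Icc _ (by positivity) (hnorm v hv)
      _ ≤ _ := mul_le_mul_of_nonneg_right (le_max_left _ _) (by positivity)
  · have hsub : closedBall x r ⊆ closedBall 0 (3 / 2 * R) := by
      refine closedBall_subset_closedBall' ?_
      have hRr : R = 2 * r := max_eq_right h
      rw [dist_zero_right]
      linarith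
    calc ⨍ v in closedBall x r, ‖v‖ ^ (-m) ∂μ
        ≤ 3 ^ finrank ℝ E * ⨍ v in closedBall (0 : E) (3 / 2 * R), ‖v‖ ^ (-m) ∂μ := by
          refine setAverage_le_mul_setAverage_of_subset hsub (measure_closedBall_pos μ x hr).ne'
            measure_closedBall_lt_top.ne (integrableOn_closedBall_norm_rpow_neg μ hm 0 _)
            (.of_forall fun v => by positivity) (le_of_eq ?_)
          rw [Measure.addHaar_real_closedBall' μ x hr.le,
            Measure.addHaar_real_closedBall' μ 0 (by positivity),
            show R = 2 * r from max_eq_right h]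
          ring
      _ = 3 ^ finrank ℝ E * (3 / 2) ^ (-m) * A * R ^ (-m) := by
          rw [setAverage_closedBall_zero_norm_rpow μ (by positivity),
            mul_rpow (by norm_num) hR.le]
          ring
      _ ≤ _ := mul_le_mul_of_nonneg_right (le_max_right _ _) (by positivity)

end Haar

/-- For `m < d`, the average of `‖v‖^(-m)` over `B_r(v₀)` is comparable to
`(max{‖v₀‖, 2r})^(-m)`, with comparison constants depending only on `m` and `d`. -/
theorem average_power_weight_comparable (d : ℕ) (hd : 1 ≤ d) (m : ℝ) (hmd : m < d) :
    ∃ c C : ℝ, 0 < c ∧ 0 < C ∧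
      ∀ (v₀ : EuclideanSpace ℝ (Fin d)) (r : ℝ), 0 < r →
        c * (max ‖v₀‖ (2 * r)) ^ (-m) ≤ (⨍ v in closedBall v₀ r, ‖v‖ ^ (-m)) ∧
        (⨍ v in closedBall v₀ r, ‖v‖ ^ (-m)) ≤ C * (max ‖v₀‖ (2 * r)) ^ (-m) := by
  have : Nontrivial (EuclideanSpace ℝ (Fin d)) :=
    Module.nontrivial_of_finrank_pos (R := ℝ) (by rw [finrank_euclideanSpace_fin]; omega)
  rw [← finrank_euclideanSpace_fin (𝕜 := ℝ) (n := d)] at hmd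
  obtain ⟨c, hc, hlower⟩ := exists_pos_mul_rpow_le_setAverage_closedBall_norm_rpow volume hmd
  obtain ⟨C, hC, hupper⟩ := exists_pos_setAverage_closedBall_norm_rpow_le_mul_rpow volume hmd
  exact ⟨c, C, hc, hC, fun v₀ r hr => ⟨hlower v₀ r hr, hupper v₀ r hr⟩⟩
end

section
/- Let d ≥ 3, γ ∈ [−d, −2], and m ∈ (0, d/|2+γ|). There is a constant C depending only on d, γ, m such that for every nonnegative f ∈ L¹(ℝ^d) and every ball B ⊂ ℝ^d, the function a(v) = ∫_{ℝ^d} f(w)|v−w|^{2+γ} dw satisfies ((1/|B|)∫_B a^m dv)^{1/m} ≤ C·(1/|B|)∫_B a dv. -/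
/-!
Write `p = 2 + γ ≤ 0` and `A f v = ∫ f(w) ‖v - w‖ ^ p dw`. For `m ≤ 1` the claim is Jensen's
inequality with `C = 1`. For `m > 1` split `f` into its parts inside and outside the doubled ball
`2B`. Outside `2B` the kernel changes by at most the factor `3 ^ (-p)` across `B`, so the far part
of `A f` is pointwise bounded by `3 ^ (-p)` times the average of `A f` on `B`. On `B × 2B` the
kernel is at least `(3r) ^ p`, so the mass `M` of `f` on `2B` is at most `(3r) ^ (-p)` times that
average; and Hölder's inequality with weight `f` gives
`∫_B (A f_near) ^ m ≤ M ^ (m - 1) ∫ f(w) ∫_B ‖v - w‖ ^ (p m) dv dw ≲ M ^ m r ^ (p m) |B|`,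
where `p m > -d` makes `‖·‖ ^ (p m)` locally integrable. Minkowski's inequality adds the two parts.
-/

open MeasureTheory Metric Set ENNReal Module

section Averages

variable {α : Type*} [MeasurableSpace α] {μ : Measure α} {f g : α → ℝ≥0∞} {m : ℝ}

theorem lintegral_mul_rpow_le (hf : AEMeasurable f μ) (hg : AEMeasurable g μ) (hm : 1 ≤ m) :
    (∫⁻ x, f x * g x ∂μ) ^ m ≤ (∫⁻ x, f x ∂μ) ^ (m - 1) * ∫⁻ x, f x * g x ^ m ∂μ := by
  have hm0 : 0 < m := by linarith
  have hm' : 0 ≤ 1 - m⁻¹ := sub_nonneg.2 (inv_le_one_of_one_le₀ hm)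
  have hfactor : ∀ x, f x ^ (1 - m⁻¹) * (f x * g x ^ m) ^ m⁻¹ = f x * g x := fun x ↦ by
    rw [mul_rpow_of_nonneg _ _ (inv_nonneg.2 hm0.le), ← rpow_mul, mul_inv_cancel₀ hm0.ne',
      rpow_one, ← mul_assoc, ← rpow_add_of_nonneg _ _ hm' (inv_nonneg.2 hm0.le), sub_add_cancel,
      rpow_one]
  have holder := lintegral_mul_norm_pow_le (g := fun x ↦ f x * g x ^ m) hf
    (hf.mul (hg.pow_const m)) hm' (inv_nonneg.2 hm0.le) (sub_add_cancel 1 m⁻¹)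
  simp only [hfactor] at holder
  calc (∫⁻ x, f x * g x ∂μ) ^ m
      ≤ ((∫⁻ x, f x ∂μ) ^ (1 - m⁻¹) * (∫⁻ x, f x * g x ^ m ∂μ) ^ m⁻¹) ^ m :=
        rpow_le_rpow holder hm0.le
    _ = (∫⁻ x, f x ∂μ) ^ (m - 1) * ∫⁻ x, f x * g x ^ m ∂μ := by
        rw [mul_rpow_of_nonneg _ _ hm0.le, ← rpow_mul, ← rpow_mul, inv_mul_cancel₀ hm0.ne',
          rpow_one, sub_mul, one_mul, inv_mul_cancel₀ hm0.ne']

theorem laverage_rpow_le (hf : AEMeasurable f μ) (hm0 : 0 ≤ m) (hm1 : m ≤ 1) :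
    ⨍⁻ x, f x ^ m ∂μ ≤ (⨍⁻ x, f x ∂μ) ^ m := by
  rw [laverage_eq', laverage_eq']
  have jensen := lintegral_mul_norm_pow_le (μ := (μ univ)⁻¹ • μ) (hf.smul_measure _)
    aemeasurable_const hm0 (sub_nonneg.2 hm1) (add_sub_cancel m 1) (g := fun _ ↦ 1)
  simp only [one_rpow, mul_one, lintegral_one, Measure.smul_apply, smul_eq_mul] at jensen
  exact jensen.trans <|
    mul_le_of_le_one_right' (rpow_le_one (ENNReal.inv_mul_le_one _) (sub_nonneg.2 hm1))

theorem laverage_add_rpow_le {a b : ℝ≥0∞} (hf : AEMeasurable f μ) (hg : AEMeasurable g μ)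
    (hm : 1 ≤ m) (ha : ⨍⁻ x, f x ^ m ∂μ ≤ a ^ m) (hb : ⨍⁻ x, g x ^ m ∂μ ≤ b ^ m) :
    ⨍⁻ x, (f x + g x) ^ m ∂μ ≤ (a + b) ^ m := by
  have hm0 : 0 < m := by linarith
  rw [laverage_eq'] at ha hb ⊢
  rw [← rpow_inv_le_iff hm0] at ha hb ⊢
  have minkowski :=
    lintegral_Lp_add_le (hf.smul_measure (μ univ)⁻¹) (hg.smul_measure (μ univ)⁻¹) hm
  simp only [Pi.add_apply, one_div] at minkowski
  exact minkowski.trans (add_le_add ha hb)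

theorem laverage_const_mul {c : ℝ≥0∞} (hc : c ≠ ∞) (f : α → ℝ≥0∞) :
    ⨍⁻ x, c * f x ∂μ = c * ⨍⁻ x, f x ∂μ := by
  simp only [laverage_eq', lintegral_const_mul' _ _ hc]

theorem le_setLAverage_of_forall_mem_le {s : Set α} {c : ℝ≥0∞} (hs : MeasurableSet s)
    (h0 : μ s ≠ 0) (htop : μ s ≠ ∞) (h : ∀ x ∈ s, c ≤ f x) : c ≤ ⨍⁻ x in s, f x ∂μ :=
  (setLAverage_const h0 htop c).symm.le.trans (laverage_mono_ae (ae_restrict_of_forall_mem hs h))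

theorem setLAverage_le_of_forall_mem_le {s : Set α} {c : ℝ≥0∞} (hs : MeasurableSet s)
    (h0 : μ s ≠ 0) (htop : μ s ≠ ∞) (h : ∀ x ∈ s, f x ≤ c) : ⨍⁻ x in s, f x ∂μ ≤ c :=
  (laverage_mono_ae (ae_restrict_of_forall_mem hs h)).trans (setLAverage_const h0 htop c).le

theorem rpow_setAverage_toReal_rpow_le {s : Set α} {K : ℝ≥0∞} (hf : AEMeasurable f (μ.restrict s))
    (hm : 0 < m) (hK : K ≠ ∞) (hfs : ∫⁻ x in s, f x ∂μ ≠ ∞)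
    (h : ⨍⁻ x in s, f x ^ m ∂μ ≤ (K * ⨍⁻ x in s, f x ∂μ) ^ m) :
    (⨍ x in s, (f x).toReal ^ m ∂μ) ^ (1 / m) ≤ K.toReal * ⨍ x in s, (f x).toReal ∂μ := by
  have hfin : ∀ᵐ x ∂μ.restrict s, f x ≠ ∞ := (ae_lt_top' hf hfs).mono fun x hx ↦ hx.ne
  have hKf : K * ⨍⁻ x in s, f x ∂μ ≠ ∞ := mul_ne_top hK (setLAverage_lt_top hfs).ne
  simp only [toReal_rpow]
  rw [← toReal_setLAverage (hf.pow_const m) (hfin.mono fun x hx ↦ rpow_ne_top_of_nonneg hm.le hx),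
    ← toReal_setLAverage hf hfin, ← toReal_mul]
  calc (⨍⁻ x in s, f x ^ m ∂μ).toReal ^ (1 / m)
      ≤ ((K * ⨍⁻ x in s, f x ∂μ) ^ m).toReal ^ (1 / m) :=
        Real.rpow_le_rpow toReal_nonneg (toReal_mono (rpow_ne_top_of_nonneg hm.le hKf) h)
          (by positivity)
    _ = (K * ⨍⁻ x in s, f x ∂μ).toReal := by
        rw [← toReal_rpow, ← Real.rpow_mul toReal_nonneg, mul_one_div_cancel hm.ne', Real.rpow_one]

end Averages

theorem nontrivial_of_neg_finrank_lt {E : Type*} [AddCommGroup E] [Module ℝ E] {q : ℝ}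
    (hq : -(finrank ℝ E : ℝ) < q) (hq0 : q ≤ 0) : Nontrivial E :=
  Module.nontrivial_of_finrank_pos (R := ℝ)
    (by exact_mod_cast (by linarith : (0 : ℝ) < finrank ℝ E))

section Kernel

variable {E : Type*} [NormedAddCommGroup E] [NormedSpace ℝ E] [FiniteDimensional ℝ E]
  [MeasurableSpace E] [BorelSpace E] (μ : Measure E) [μ.IsAddHaarMeasure]

theorem lintegral_comp_smul_of_pos (f : E → ℝ≥0∞) {R : ℝ} (hR : 0 < R) :
    ∫⁻ x, f (R • x) ∂μ = ENNReal.ofReal (R ^ finrank ℝ E)⁻¹ * ∫⁻ x, f x ∂μ := by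
  refine (lintegral_map_equiv f (Homeomorph.smulOfNeZero R hR.ne').toMeasurableEquiv).symm.trans ?_
  rw [show ⇑(Homeomorph.smulOfNeZero R hR.ne').toMeasurableEquiv = (R • ·) from rfl,
    Measure.map_addHaar_smul μ hR.ne', lintegral_smul_measure, smul_eq_mul,
    abs_of_pos (by positivity)]

theorem setLIntegral_closedBall_norm_sub_rpow (w : E) {r : ℝ} (hr : 0 < r) (q : ℝ) :
    ∫⁻ v in closedBall w r, ENNReal.ofReal (‖v - w‖ ^ q) ∂μ =
      ENNReal.ofReal (r ^ (finrank ℝ E + q)) *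
        ∫⁻ v in closedBall 0 1, ENNReal.ofReal (‖v‖ ^ q) ∂μ := by
  set k : E → ℝ≥0∞ := fun v ↦ ENNReal.ofReal (‖v‖ ^ q)
  calc ∫⁻ v in closedBall w r, k (v - w) ∂μ
      = ∫⁻ v, (closedBall 0 r).indicator k (v - w) ∂μ := by
        rw [← lintegral_indicator measurableSet_closedBall]
        congr 1 with v
        simp [indicator, dist_eq_norm]
    _ = ∫⁻ v, (closedBall 0 r).indicator k v ∂μ := lintegral_sub_right_eq_self _ w
    _ = ENNReal.ofReal (r ^ finrank ℝ E) * ∫⁻ v, (closedBall 0 r).indicator k (r • v) ∂μ := by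
        rw [lintegral_comp_smul_of_pos μ _ hr, ← mul_assoc, ← ENNReal.ofReal_mul (by positivity),
          mul_inv_cancel₀ (by positivity), ENNReal.ofReal_one, one_mul]
    _ = ENNReal.ofReal (r ^ finrank ℝ E) * ∫⁻ v in closedBall 0 1, k (r • v) ∂μ := by
        rw [← lintegral_indicator measurableSet_closedBall]
        congr 2 with v
        simp [indicator, norm_smul, abs_of_pos hr, hr]
    _ = ENNReal.ofReal (r ^ (finrank ℝ E + q)) * ∫⁻ v in closedBall 0 1, k v ∂μ := by
        rw [← lintegral_const_mul' _ _ ofReal_ne_top, ← lintegral_const_mul' _ _ ofReal_ne_top]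
        congr 1 with v
        simp only [k, norm_smul, Real.norm_of_nonneg hr.le, Real.mul_rpow hr.le (norm_nonneg _),
          Real.rpow_add hr, Real.rpow_natCast]
        rw [ENNReal.ofReal_mul (by positivity), ENNReal.ofReal_mul (by positivity), mul_assoc]

theorem lintegral_closedBall_norm_rpow_lt_top {q : ℝ} (hq : -(finrank ℝ E : ℝ) < q)
    (hq0 : q ≤ 0) : ∫⁻ v in closedBall 0 1, ENNReal.ofReal (‖v‖ ^ q) ∂μ < ∞ := by
  have hd : 1 ≤ finrank ℝ E := by exact_mod_cast (by linarith : (0 : ℝ) < finrank ℝ E)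
  have hloc : LocallyIntegrable (fun v : E ↦ ‖v‖ ^ q) μ :=
    locallyIntegrable_of_norm_le_rpow hd (C := 1) (α := -q) (by linarith)
      (ae_of_all _ fun v ↦ by simp [abs_of_nonneg (Real.rpow_nonneg (norm_nonneg v) q)])
      (measurable_norm.pow_const q).aestronglyMeasurable
  rw [← hasFiniteIntegral_iff_ofReal (ae_of_all _ fun v ↦ Real.rpow_nonneg (norm_nonneg v) q)]
  exact (hloc.integrableOn_isCompact (isCompact_closedBall 0 1)).2

theorem exists_setLIntegral_closedBall_norm_sub_rpow_le {q : ℝ}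
    (hq : -(finrank ℝ E : ℝ) < q) (hq0 : q ≤ 0) :
    ∃ C : ℝ≥0∞, C ≠ ∞ ∧ ∀ (v₀ w : E) {r : ℝ}, 0 < r →
      ∫⁻ v in closedBall v₀ r, ENNReal.ofReal (‖v - w‖ ^ q) ∂μ ≤
        C * ENNReal.ofReal (r ^ q) * μ (closedBall v₀ r) := by
  have : Nontrivial E := nontrivial_of_neg_finrank_lt hq hq0
  set I := ∫⁻ v in closedBall 0 1, ENNReal.ofReal (‖v‖ ^ q) ∂μ
  set ν := μ (closedBall (0 : E) 1)
  have hν0 : ν ≠ 0 := (measure_closedBall_pos μ 0 one_pos).ne'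
  have hνtop : ν ≠ ∞ := measure_closedBall_lt_top.ne
  refine ⟨I / ν + 1, ?_, fun v₀ w r hr ↦ ?_⟩
  · exact add_ne_top.2 ⟨(ENNReal.div_lt_top (lintegral_closedBall_norm_rpow_lt_top μ hq hq0).ne
      hν0).ne, one_ne_top⟩
  set B := closedBall v₀ r
  have hfar : ∀ v ∈ B \ closedBall w r, ENNReal.ofReal (‖v - w‖ ^ q) ≤ ENNReal.ofReal (r ^ q) :=
    fun v hv ↦ ofReal_le_ofReal <| Real.rpow_le_rpow_of_nonpos hr
      (by simpa [dist_eq_norm] using hv.2 : r < ‖v - w‖).le hq0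
  calc ∫⁻ v in B, ENNReal.ofReal (‖v - w‖ ^ q) ∂μ
      = ∫⁻ v in B ∩ closedBall w r, ENNReal.ofReal (‖v - w‖ ^ q) ∂μ +
          ∫⁻ v in B \ closedBall w r, ENNReal.ofReal (‖v - w‖ ^ q) ∂μ :=
        (lintegral_inter_add_sdiff _ _ measurableSet_closedBall).symm
    _ ≤ ∫⁻ v in closedBall w r, ENNReal.ofReal (‖v - w‖ ^ q) ∂μ +
          ∫⁻ _ in B \ closedBall w r, ENNReal.ofReal (r ^ q) ∂μ :=
        add_le_add (lintegral_mono_set inter_subset_right)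
          (setLIntegral_mono' (measurableSet_closedBall.diff measurableSet_closedBall) hfar)
    _ ≤ ENNReal.ofReal (r ^ (finrank ℝ E + q)) * I + ENNReal.ofReal (r ^ q) * μ B := by
        rw [setLIntegral_closedBall_norm_sub_rpow μ w hr, setLIntegral_const]
        gcongr
        exact sdiff_subset
    _ = (I / ν + 1) * ENNReal.ofReal (r ^ q) * μ B := by
        rw [Measure.addHaar_closedBall' μ v₀ hr.le, Real.rpow_add hr, Real.rpow_natCast,
          ENNReal.ofReal_mul (by positivity)]
        nth_rewrite 1 [← ENNReal.div_mul_cancel hν0 hνtop (b := I)]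
        ring

end Kernel

theorem rpow_norm_sub_le_of_notMem_closedBall {E : Type*} [NormedAddCommGroup E]
    {v v' w v₀ : E} {r p : ℝ} (hp : p ≤ 0) (hv : v ∈ closedBall v₀ r)
    (hv' : v' ∈ closedBall v₀ r) (hw : w ∉ closedBall v₀ (2 * r)) :
    ‖v - w‖ ^ p ≤ 3 ^ (-p) * ‖v' - w‖ ^ p := by
  rw [mem_closedBall] at hv hv' hw
  rw [← dist_eq_norm, ← dist_eq_norm]
  have hv'w : dist v' w ≤ 3 * dist v w := by
    linarith [dist_triangle v' v w, dist_triangle v' v₀ v, dist_comm v v₀,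
      dist_triangle w v v₀, dist_comm v w]
  have hv'w_pos : 0 < dist v' w := by
    linarith [dist_triangle w v' v₀, dist_comm v' w, dist_nonneg (x := v) (y := v₀)]
  have h3 : (0 : ℝ) < 3 ^ p := by positivity
  calc dist v w ^ p = 3 ^ (-p) * (3 * dist v w) ^ p := by
        rw [Real.mul_rpow (by norm_num) dist_nonneg, Real.rpow_neg (by norm_num), ← mul_assoc,
          inv_mul_cancel₀ h3.ne', one_mul]
    _ ≤ 3 ^ (-p) * dist v' w ^ p :=
        mul_le_mul_of_nonneg_left (Real.rpow_le_rpow_of_nonpos hv'w_pos hv'w hp) (by positivity)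

section Potential

variable {E : Type*} [NormedAddCommGroup E] [MeasurableSpace E] [BorelSpace E]

noncomputable def powerPotential (μ : Measure E) (p : ℝ) (g : E → ℝ≥0∞) (v : E) : ℝ≥0∞ :=
  ∫⁻ w, g w * ENNReal.ofReal (‖v - w‖ ^ p) ∂μ

variable {μ : Measure E} {p : ℝ} {g : E → ℝ≥0∞}

theorem measurable_powerPotential [SecondCountableTopology E] [SFinite μ] (hg : Measurable g) :
    Measurable (powerPotential μ p g) :=
  Measurable.lintegral_prod_right (by fun_prop)

theorem powerPotential_add {g₁ g₂ : E → ℝ≥0∞} (hg₁ : Measurable g₁) :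
    powerPotential μ p (g₁ + g₂) = powerPotential μ p g₁ + powerPotential μ p g₂ := by
  ext v
  simp only [powerPotential, Pi.add_apply, add_mul]
  exact lintegral_add_left (by fun_prop) _

theorem powerPotential_rpow_le (hg : Measurable g) {m : ℝ} (hm : 1 ≤ m) (v : E) :
    powerPotential μ p g v ^ m ≤ (∫⁻ w, g w ∂μ) ^ (m - 1) * powerPotential μ (p * m) g v := by
  have hkernel : ∀ w, ENNReal.ofReal (‖v - w‖ ^ p) ^ m = ENNReal.ofReal (‖v - w‖ ^ (p * m)) :=
    fun w ↦ by
      rw [ofReal_rpow_of_nonneg (by positivity) (by linarith), ← Real.rpow_mul (norm_nonneg _)]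
  simpa only [powerPotential, hkernel] using
    lintegral_mul_rpow_le hg.aemeasurable
      (by fun_prop : Measurable fun w ↦ ENNReal.ofReal (‖v - w‖ ^ p)).aemeasurable hm

theorem setLIntegral_powerPotential_le [SecondCountableTopology E] [SFinite μ] (hg : Measurable g)
    {s : Set E} {D : ℝ≥0∞} (hD : ∀ w, ∫⁻ v in s, ENNReal.ofReal (‖v - w‖ ^ p) ∂μ ≤ D) :
    ∫⁻ v in s, powerPotential μ p g v ∂μ ≤ D * ∫⁻ w, g w ∂μ := by
  calc ∫⁻ v in s, powerPotential μ p g v ∂μ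
      = ∫⁻ w, g w * ∫⁻ v in s, ENNReal.ofReal (‖v - w‖ ^ p) ∂μ ∂μ := by
        unfold powerPotential
        rw [lintegral_lintegral_swap (by fun_prop : Measurable _).aemeasurable]
        congr 1 with w
        exact lintegral_const_mul _ (by fun_prop)
    _ ≤ ∫⁻ w, g w * D ∂μ := lintegral_mono fun w ↦ by gcongr; exact hD w
    _ = D * ∫⁻ w, g w ∂μ := by rw [lintegral_mul_const _ hg, mul_comm]

theorem setLIntegral_rpow_powerPotential_le [SecondCountableTopology E] [SFinite μ]
    (hg : Measurable g) {m : ℝ} (hm : 1 ≤ m) {s : Set E} {D : ℝ≥0∞}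
    (hD : ∀ w, ∫⁻ v in s, ENNReal.ofReal (‖v - w‖ ^ (p * m)) ∂μ ≤ D) :
    ∫⁻ v in s, powerPotential μ p g v ^ m ∂μ ≤ D * (∫⁻ w, g w ∂μ) ^ m := by
  set M := ∫⁻ w, g w ∂μ
  calc ∫⁻ v in s, powerPotential μ p g v ^ m ∂μ
      ≤ ∫⁻ v in s, M ^ (m - 1) * powerPotential μ (p * m) g v ∂μ :=
        lintegral_mono fun v ↦ powerPotential_rpow_le hg hm v
    _ = M ^ (m - 1) * ∫⁻ v in s, powerPotential μ (p * m) g v ∂μ :=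
        lintegral_const_mul _ (measurable_powerPotential hg)
    _ ≤ M ^ (m - 1) * (D * M) := by grw [setLIntegral_powerPotential_le hg hD]
    _ = D * M ^ m := by
        nth_rewrite 2 [← rpow_one M]
        rw [mul_left_comm, ← rpow_add_of_nonneg _ _ (by linarith) zero_le_one, sub_add_cancel]

theorem lintegral_closedBall_le_powerPotential [NullSingletonClass μ] (hp : p ≤ 0)
    {v₀ v : E} {r : ℝ} (hv : v ∈ closedBall v₀ r) :
    ENNReal.ofReal ((3 * r) ^ p) * ∫⁻ w in closedBall v₀ (2 * r), g w ∂μ ≤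
      powerPotential μ p g v := by
  rw [← lintegral_const_mul' _ _ ofReal_ne_top]
  refine (lintegral_mono_ae ?_).trans (setLIntegral_le_lintegral _ _)
  -- `w = v` must be discarded: there the kernel is `0 ^ p`, which is `0` for `p < 0`.
  filter_upwards [ae_restrict_mem measurableSet_closedBall, ae_restrict_of_ae (μ.ae_ne v)]
    with w hw hwv
  rw [mul_comm]
  refine mul_le_mul_right (ofReal_le_ofReal ?_) _
  rw [mem_closedBall] at hv hw
  refine Real.rpow_le_rpow_of_nonpos (norm_pos_iff.2 (sub_ne_zero.2 hwv.symm)) ?_ hp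
  linarith [dist_triangle v v₀ w, dist_comm w v₀, dist_eq_norm v w]

theorem integral_mul_rpow_norm_sub_eq_toReal_powerPotential {f : E → ℝ} (hf0 : ∀ w, 0 ≤ f w)
    (hf : AEStronglyMeasurable f μ) {F : E → ℝ≥0∞}
    (hF : (fun w ↦ ENNReal.ofReal (f w)) =ᵐ[μ] F) (v : E) :
    ∫ w, f w * ‖v - w‖ ^ p ∂μ = (powerPotential μ p F v).toReal := by
  rw [integral_eq_lintegral_of_nonneg_ae (f := fun w ↦ f w * ‖v - w‖ ^ p)
    (ae_of_all _ fun w ↦ by have := hf0 w; positivity)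
    (hf.mul (by fun_prop : Measurable fun w ↦ ‖v - w‖ ^ p).aestronglyMeasurable)]
  congr 1
  refine lintegral_congr_ae ?_
  filter_upwards [hF] with w hw
  rw [ENNReal.ofReal_mul (hf0 w), hw]

end Potential

section ReverseHolder

variable {E : Type*} [NormedAddCommGroup E] [NormedSpace ℝ E] [FiniteDimensional ℝ E]
  [MeasurableSpace E] [BorelSpace E] {μ : Measure E} [μ.IsAddHaarMeasure]
  {p m : ℝ} {g : E → ℝ≥0∞} {v₀ : E} {r : ℝ}

theorem powerPotential_indicator_compl_le_setLAverage (hp : p ≤ 0) (hr : 0 < r)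
    {v : E} (hv : v ∈ closedBall v₀ r) :
    powerPotential μ p ((closedBall v₀ (2 * r))ᶜ.indicator g) v ≤
      ENNReal.ofReal (3 ^ (-p)) *
        ⨍⁻ v' in closedBall v₀ r,
          powerPotential μ p ((closedBall v₀ (2 * r))ᶜ.indicator g) v' ∂μ := by
  rw [← laverage_const_mul ofReal_ne_top]
  refine le_setLAverage_of_forall_mem_le measurableSet_closedBall
    (measure_closedBall_pos μ v₀ hr).ne' measure_closedBall_lt_top.ne fun v' hv' ↦ ?_
  rw [powerPotential, powerPotential, ← lintegral_const_mul' _ _ ofReal_ne_top]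
  refine lintegral_mono fun w ↦ ?_
  by_cases hw : w ∈ closedBall v₀ (2 * r)
  · simp [hw]
  rw [indicator_of_mem (mem_compl hw), mul_left_comm, ← ENNReal.ofReal_mul (by positivity)]
  exact mul_le_mul_right (ofReal_le_ofReal (rpow_norm_sub_le_of_notMem_closedBall hp hv hv' hw)) _

theorem lintegral_closedBall_two_mul_le_setLAverage_powerPotential [Nontrivial E] (hp : p ≤ 0)
    (hr : 0 < r) :
    ∫⁻ w in closedBall v₀ (2 * r), g w ∂μ ≤
      ENNReal.ofReal ((3 * r) ^ (-p)) * ⨍⁻ v in closedBall v₀ r, powerPotential μ p g v ∂μ := by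
  have hlow : ENNReal.ofReal ((3 * r) ^ p) * ∫⁻ w in closedBall v₀ (2 * r), g w ∂μ ≤
      ⨍⁻ v in closedBall v₀ r, powerPotential μ p g v ∂μ :=
    le_setLAverage_of_forall_mem_le measurableSet_closedBall (measure_closedBall_pos μ v₀ hr).ne'
      measure_closedBall_lt_top.ne fun v hv ↦ lintegral_closedBall_le_powerPotential hp hv
  calc ∫⁻ w in closedBall v₀ (2 * r), g w ∂μ
      = ENNReal.ofReal ((3 * r) ^ (-p)) *
          (ENNReal.ofReal ((3 * r) ^ p) * ∫⁻ w in closedBall v₀ (2 * r), g w ∂μ) := by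
        rw [← mul_assoc, ← ENNReal.ofReal_mul (by positivity), ← Real.rpow_add (by positivity),
          neg_add_cancel, Real.rpow_zero, ofReal_one, one_mul]
    _ ≤ _ := by gcongr

theorem setLAverage_rpow_powerPotential_indicator_le [Nontrivial E] (hp : p ≤ 0) (hm : 1 ≤ m)
    (hg : Measurable g) (hr : 0 < r) {C : ℝ≥0∞}
    (hC : ∀ w, ∫⁻ v in closedBall v₀ r, ENNReal.ofReal (‖v - w‖ ^ (p * m)) ∂μ ≤
      C * ENNReal.ofReal (r ^ (p * m)) * μ (closedBall v₀ r)) :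
    ⨍⁻ v in closedBall v₀ r, powerPotential μ p ((closedBall v₀ (2 * r)).indicator g) v ^ m ∂μ ≤
      ((C * ENNReal.ofReal (3 ^ (-(p * m)))) ^ m⁻¹ *
        ⨍⁻ v in closedBall v₀ r, powerPotential μ p g v ∂μ) ^ m := by
  have hm0 : 0 < m := by linarith
  set B := closedBall v₀ r
  set S := closedBall v₀ (2 * r)
  set M := ∫⁻ w in S, g w ∂μ
  have hg₁ : Measurable (S.indicator g) := hg.indicator measurableSet_closedBall
  have hM₁ : ∫⁻ w, S.indicator g w ∂μ = M := lintegral_indicator measurableSet_closedBall _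
  have hscale : r ^ (p * m) * ((3 * r) ^ (-p)) ^ m = 3 ^ (-(p * m)) := by
    rw [← Real.rpow_mul (by positivity), Real.mul_rpow (by norm_num) hr.le, neg_mul,
      Real.rpow_neg hr.le, mul_left_comm, mul_inv_cancel₀ (by positivity), mul_one]
  calc ⨍⁻ v in B, powerPotential μ p (S.indicator g) v ^ m ∂μ
      ≤ C * ENNReal.ofReal (r ^ (p * m)) * M ^ m := by
        rw [setLAverage_eq]
        refine ENNReal.div_le_of_le_mul
          ((setLIntegral_rpow_powerPotential_le hg₁ hm hC).trans_eq ?_)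
        rw [hM₁]
        ring
    _ ≤ C * ENNReal.ofReal (r ^ (p * m)) *
          (ENNReal.ofReal ((3 * r) ^ (-p)) * ⨍⁻ v in B, powerPotential μ p g v ∂μ) ^ m := by
        gcongr
        exact lintegral_closedBall_two_mul_le_setLAverage_powerPotential hp hr
    _ = _ := by
        rw [mul_rpow_of_nonneg _ _ hm0.le, mul_rpow_of_nonneg _ _ hm0.le, ← rpow_mul,
          inv_mul_cancel₀ hm0.ne', rpow_one, ofReal_rpow_of_nonneg (by positivity) hm0.le,
          ← hscale, ENNReal.ofReal_mul (by positivity)]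
        ring

variable (μ) in
theorem exists_setLAverage_rpow_powerPotential_le_of_one_lt (hp : p ≤ 0) (hm : 1 < m)
    (hpm : -(finrank ℝ E : ℝ) < p * m) :
    ∃ K : ℝ≥0∞, K ≠ 0 ∧ K ≠ ∞ ∧ ∀ g : E → ℝ≥0∞, Measurable g → ∀ (v₀ : E) (r : ℝ), 0 < r →
      ⨍⁻ v in closedBall v₀ r, powerPotential μ p g v ^ m ∂μ ≤
        (K * ⨍⁻ v in closedBall v₀ r, powerPotential μ p g v ∂μ) ^ m := by
  have hpm0 : p * m ≤ 0 := mul_nonpos_of_nonpos_of_nonneg hp (by linarith)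
  have : Nontrivial E := nontrivial_of_neg_finrank_lt hpm hpm0
  obtain ⟨C, hCtop, hC⟩ := exists_setLIntegral_closedBall_norm_sub_rpow_le μ hpm hpm0
  set κ := (C * ENNReal.ofReal (3 ^ (-(p * m)))) ^ m⁻¹
  refine ⟨κ + ENNReal.ofReal (3 ^ (-p)), ?_, ?_, fun g hg v₀ r hr ↦ ?_⟩
  · exact (lt_of_lt_of_le (ofReal_pos.2 (by positivity)) le_add_self).ne'
  · exact add_ne_top.2 ⟨rpow_ne_top_of_nonneg (by positivity) (mul_ne_top hCtop ofReal_ne_top),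
      ofReal_ne_top⟩
  set S := closedBall v₀ (2 * r)
  set A := powerPotential μ p g
  have hsplit : A = powerPotential μ p (S.indicator g) + powerPotential μ p (Sᶜ.indicator g) := by
    rw [← powerPotential_add (hg.indicator measurableSet_closedBall), indicator_self_add_compl]
  have hfar : ∀ v ∈ closedBall v₀ r,
      powerPotential μ p (Sᶜ.indicator g) v ^ m ≤
        (ENNReal.ofReal (3 ^ (-p)) * ⨍⁻ v in closedBall v₀ r, A v ∂μ) ^ m := by
    intro v hv
    refine rpow_le_rpow ((powerPotential_indicator_compl_le_setLAverage hp hr hv).trans ?_)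
      (by linarith)
    gcongr
    exact ae_of_all _ fun v' ↦ by rw [hsplit]; exact le_add_self
  calc ⨍⁻ v in closedBall v₀ r, A v ^ m ∂μ
      = ⨍⁻ v in closedBall v₀ r, (powerPotential μ p (S.indicator g) v +
          powerPotential μ p (Sᶜ.indicator g) v) ^ m ∂μ := by
        rw [hsplit]
        rfl
    _ ≤ (κ * ⨍⁻ v in closedBall v₀ r, A v ∂μ +
          ENNReal.ofReal (3 ^ (-p)) * ⨍⁻ v in closedBall v₀ r, A v ∂μ) ^ m :=
        laverage_add_rpow_le
          (measurable_powerPotential (hg.indicator measurableSet_closedBall)).aemeasurable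
          (measurable_powerPotential (hg.indicator measurableSet_closedBall.compl)).aemeasurable
          hm.le (setLAverage_rpow_powerPotential_indicator_le hp hm.le hg hr (hC v₀ · hr))
          (setLAverage_le_of_forall_mem_le measurableSet_closedBall
            (measure_closedBall_pos μ v₀ hr).ne' measure_closedBall_lt_top.ne hfar)
    _ = _ := by rw [add_mul]

variable (μ) in
theorem exists_setLAverage_rpow_powerPotential_le (hp : p ≤ 0) (hm : 0 < m)
    (hpm : -(finrank ℝ E : ℝ) < p * m) :
    ∃ K : ℝ≥0∞, K ≠ 0 ∧ K ≠ ∞ ∧ ∀ g : E → ℝ≥0∞, Measurable g → ∀ (v₀ : E) (r : ℝ), 0 < r →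
      ⨍⁻ v in closedBall v₀ r, powerPotential μ p g v ^ m ∂μ ≤
        (K * ⨍⁻ v in closedBall v₀ r, powerPotential μ p g v ∂μ) ^ m := by
  rcases le_or_gt m 1 with hm1 | hm1
  · refine ⟨1, one_ne_zero, one_ne_top, fun g hg v₀ r _ ↦ ?_⟩
    rw [one_mul]
    exact laverage_rpow_le (measurable_powerPotential hg).aemeasurable hm.le hm1
  · exact exists_setLAverage_rpow_powerPotential_le_of_one_lt μ hp hm1 hpm

end ReverseHolder

theorem landau_a_reverse_holder_general (d : ℕ) (γ m : ℝ)
    (hγ₁ : -(d : ℝ) ≤ γ) (hγ₂ : γ ≤ -2) (hm0 : 0 < m) (hmd : m * |2 + γ| < d) :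
    ∃ C : ℝ, 0 < C ∧
      ∀ f : EuclideanSpace ℝ (Fin d) → ℝ, (∀ v, 0 ≤ f v) → Integrable f →
        ∀ (v₀ : EuclideanSpace ℝ (Fin d)) (r : ℝ), 0 < r →
          (⨍ v in closedBall v₀ r, (∫ w, f w * ‖v - w‖ ^ (2 + γ)) ^ m) ^ (1 / m) ≤
            C * ⨍ v in closedBall v₀ r, ∫ w, f w * ‖v - w‖ ^ (2 + γ) := by
  have hp : 2 + γ ≤ 0 := by linarith
  have hpd : -(finrank ℝ (EuclideanSpace ℝ (Fin d)) : ℝ) < 2 + γ := by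
    rw [finrank_euclideanSpace_fin]
    linarith
  have hpm : -(finrank ℝ (EuclideanSpace ℝ (Fin d)) : ℝ) < (2 + γ) * m := by
    rw [abs_of_nonpos hp] at hmd
    rw [finrank_euclideanSpace_fin]
    linarith
  obtain ⟨K, hK0, hKtop, hK⟩ := exists_setLAverage_rpow_powerPotential_le volume hp hm0 hpm
  obtain ⟨C, hCtop, hC⟩ := exists_setLIntegral_closedBall_norm_sub_rpow_le volume hpd hp
  refine ⟨K.toReal, toReal_pos hK0 hKtop, fun f hf0 hfi v₀ r hr ↦ ?_⟩
  have hF := hfi.aemeasurable.ennreal_ofReal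
  simp only [integral_mul_rpow_norm_sub_eq_toReal_powerPotential hf0 hfi.1 hF.ae_eq_mk]
  refine rpow_setAverage_toReal_rpow_le (measurable_powerPotential hF.measurable_mk).aemeasurable
    hm0 hKtop ?_ (hK _ hF.measurable_mk v₀ r hr)
  refine ne_top_of_le_ne_top ?_ (setLIntegral_powerPotential_le hF.measurable_mk (hC v₀ · hr))
  rw [← lintegral_congr_ae hF.ae_eq_mk]
  exact mul_ne_top (mul_ne_top (mul_ne_top hCtop ofReal_ne_top) measure_closedBall_lt_top.ne)
    hfi.lintegral_lt_top.ne

/-- Reverse Hölder inequality for the Landau coefficient `a_{f,γ}(v) = ∫ f(w)‖v-w‖^{2+γ} dw`: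
for `d ≥ 3`, `γ ∈ [-d,-2]` and `m ∈ (0, d/|2+γ|)` there is `C = C(d,γ,m)` such that
`(⨍_B a^m)^{1/m} ≤ C ⨍_B a` for every nonnegative `f ∈ L¹` and every ball `B`. -/
theorem landau_a_reverse_holder (d : ℕ) (hd : 3 ≤ d) (γ m : ℝ)
    (hγ₁ : -(d : ℝ) ≤ γ) (hγ₂ : γ ≤ -2) (hm0 : 0 < m) (hmd : m * |2 + γ| < d) :
    ∃ C : ℝ, 0 < C ∧
      ∀ f : EuclideanSpace ℝ (Fin d) → ℝ, (∀ v, 0 ≤ f v) → Integrable f →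
        ∀ (v₀ : EuclideanSpace ℝ (Fin d)) (r : ℝ), 0 < r →
          (⨍ v in closedBall v₀ r, (∫ w, f w * ‖v - w‖ ^ (2 + γ)) ^ m) ^ (1 / m) ≤
            C * ⨍ v in closedBall v₀ r, ∫ w, f w * ‖v - w‖ ^ (2 + γ) :=
  landau_a_reverse_holder_general d γ m hγ₁ hγ₂ hm0 hmd
end

section
/- Let d ≥ 3 and γ ∈ [−d, −2]. There is a constant C depending only on d and γ such that for every nonnegative f ∈ L¹(ℝ^d) and every cube Q ⊂ ℝ^d, with h = f if γ = −d and h(v) = c(d,γ)∫ f(w)|v−w|^γ dw if γ > −d, and a(v) = C(d,γ)∫ f(w)|v−w|^{2+γ} dw, one has |Q|^{1/d} · ((1/|Q|)∫_Q h dv)^{1/2} · ((1/|Q|)∫_Q a^{-1} dv)^{1/2} ≤ C. -/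
open MeasureTheory Metric

/-- The axis-parallel cube in `ℝ^d` with center `v₀` and side length `ℓ`. -/
def axisCube (d : ℕ) (v₀ : EuclideanSpace ℝ (Fin d)) (ℓ : ℝ) :
    Set (EuclideanSpace ℝ (Fin d)) :=
  {v | ∀ i, |v i - v₀ i| ≤ ℓ / 2}

/-!
Let `r = ℓ√d/2` be the circumradius of the cube `Q` and `A = ∫ f(w) (|v₀ - w| + r)^{2+γ} dw`.
Since `2 + γ ≤ 0` and `|v - w| ≤ |v₀ - w| + r` for `v ∈ Q`, the diffusion trace is at least `A`
on `Q`, so `⨍_Q a⁻¹ ≤ A⁻¹`. Conversely `∫_Q h ≲ r^{d-2} A`: for `γ = -d` because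
`(|v₀ - w| + r)^{2-d} ≥ (2r)^{2-d}` on `Q`, and for `γ > -d` by Tonelli and the kernel bound
`∫_{B(c,r)} |v - w|^γ dv ≲ r^d (|c - w| + r)^γ`. The latter holds trivially when `w` is far from
the ball, and otherwise follows from `∫_{B(w,ρ)} |v - w|^γ dv = ρ^{d+γ} ∫_{B(0,1)} |x|^γ dx`,
which is finite as `γ > -d`. Multiplying, `ℓ² ⨍_Q h ⨍_Q a⁻¹ ≲ ℓ² · ℓ^{-d} r^{d-2} A · A⁻¹ ≲ 1`.
-/

open Module

section Kernel

variable {E : Type*} [NormedAddCommGroup E] [NormedSpace ℝ E] [FiniteDimensional ℝ E]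
  [MeasurableSpace E] [BorelSpace E] (μ : Measure E) [μ.IsAddHaarMeasure]

lemma setIntegral_ball_zero_norm_rpow (γ : ℝ) {ρ : ℝ} (hρ : 0 < ρ) :
    ∫ x in ball (0 : E) ρ, ‖x‖ ^ γ ∂μ =
      ρ ^ ((finrank ℝ E : ℝ) + γ) * ∫ x in ball (0 : E) 1, ‖x‖ ^ γ ∂μ := by
  have h := Measure.setIntegral_comp_smul_of_pos μ (fun x : E => ‖x‖ ^ γ) (ball 0 1) hρ
  simp only [smul_unitBall_of_pos hρ, norm_smul, Real.norm_of_nonneg hρ.le,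
    Real.mul_rpow hρ.le (norm_nonneg _), integral_const_mul, smul_eq_mul] at h
  rw [Real.rpow_add hρ, Real.rpow_natCast, mul_assoc, h, ← mul_assoc,
    mul_inv_cancel₀ (by positivity), one_mul]

lemma lintegral_ball_norm_sub_rpow [Nontrivial E] {γ : ℝ} (hγ : -(finrank ℝ E : ℝ) < γ)
    (w : E) {ρ : ℝ} (hρ : 0 < ρ) :
    ∫⁻ x in ball w ρ, ENNReal.ofReal (‖x - w‖ ^ γ) ∂μ =
      ENNReal.ofReal (ρ ^ ((finrank ℝ E : ℝ) + γ) * ∫ x in ball (0 : E) 1, ‖x‖ ^ γ ∂μ) := by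
  have hpre : (fun x => x - w) ⁻¹' ball (0 : E) ρ = ball w ρ := by
    ext x; simp [dist_eq_norm]
  rw [← hpre, (measurePreserving_sub_right μ w).setLIntegral_comp_preimage measurableSet_ball
    (f := fun x => ENNReal.ofReal (‖x‖ ^ γ)) (by fun_prop),
    ← setIntegral_ball_zero_norm_rpow μ γ hρ]
  refine (ofReal_integral_eq_lintegral_ofReal ?_ (ae_of_all _ fun x => by positivity)).symm
  refine integrableOn_ball_of_norm_le_rpow (C := 1) (α := -γ) finrank_pos (by linarith)
    (ae_of_all _ fun x => ?_) (measurable_norm.pow_const γ).aestronglyMeasurable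
  simp [Real.norm_of_nonneg (Real.rpow_nonneg (norm_nonneg x) γ)]

lemma lintegral_closedBall_norm_sub_rpow_le_of_far {γ : ℝ} (hγ : γ ≤ 0) {c w : E} {r : ℝ}
    (hr : 0 < r) (hfar : 2 * r ≤ ‖c - w‖) :
    ∫⁻ x in closedBall c r, ENNReal.ofReal (‖x - w‖ ^ γ) ∂μ ≤
      ENNReal.ofReal ((3 : ℝ) ^ (-γ) * μ.real (ball 0 1) * r ^ finrank ℝ E *
        (‖c - w‖ + r) ^ γ) := by
  have hlow : ∀ x ∈ closedBall c r, (‖c - w‖ + r) / 3 ≤ ‖x - w‖ := fun x hx => by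
    have := norm_sub_norm_le (c - w) (c - x)
    rw [sub_sub_sub_cancel_left, norm_sub_rev c x] at this
    linarith [mem_closedBall_iff_norm.mp hx]
  calc ∫⁻ x in closedBall c r, ENNReal.ofReal (‖x - w‖ ^ γ) ∂μ
      ≤ ∫⁻ _ in closedBall c r, ENNReal.ofReal (((‖c - w‖ + r) / 3) ^ γ) ∂μ :=
        setLIntegral_mono measurable_const fun x hx => ENNReal.ofReal_le_ofReal
          (Real.rpow_le_rpow_of_nonpos (by positivity) (hlow x hx) hγ)
    _ = ENNReal.ofReal (((‖c - w‖ + r) / 3) ^ γ * (r ^ finrank ℝ E * μ.real (ball 0 1))) := by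
        rw [setLIntegral_const, μ.addHaar_closedBall c hr.le, measureReal_def,
          ENNReal.ofReal_mul (by positivity), ENNReal.ofReal_mul (by positivity),
          ENNReal.ofReal_toReal measure_ball_lt_top.ne]
    _ = _ := by
        rw [Real.div_rpow (by positivity) (by norm_num), Real.rpow_neg (by norm_num)]
        ring_nf

lemma lintegral_closedBall_norm_sub_rpow_le_of_near [Nontrivial E] {γ : ℝ}
    (hγ : -(finrank ℝ E : ℝ) < γ) (hγ0 : γ ≤ 0) {c w : E} {r : ℝ} (hr : 0 < r)
    (hnear : ‖c - w‖ < 2 * r) :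
    ∫⁻ x in closedBall c r, ENNReal.ofReal (‖x - w‖ ^ γ) ∂μ ≤
      ENNReal.ofReal ((3 : ℝ) ^ finrank ℝ E * (∫ x in ball (0 : E) 1, ‖x‖ ^ γ ∂μ) *
        r ^ finrank ℝ E * (‖c - w‖ + r) ^ γ) := by
  have hsub : closedBall c r ⊆ ball w (3 * r) := fun x hx => by
    rw [mem_ball_iff_norm]
    linarith [norm_sub_le_norm_sub_add_norm_sub x c w, mem_closedBall_iff_norm.mp hx]
  have hK : 0 ≤ ∫ x in ball (0 : E) 1, ‖x‖ ^ γ ∂μ :=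
    setIntegral_nonneg measurableSet_ball fun x _ => by positivity
  calc ∫⁻ x in closedBall c r, ENNReal.ofReal (‖x - w‖ ^ γ) ∂μ
      ≤ ∫⁻ x in ball w (3 * r), ENNReal.ofReal (‖x - w‖ ^ γ) ∂μ := lintegral_mono_set hsub
    _ = ENNReal.ofReal ((3 * r) ^ ((finrank ℝ E : ℝ) + γ) *
          ∫ x in ball (0 : E) 1, ‖x‖ ^ γ ∂μ) :=
        lintegral_ball_norm_sub_rpow μ hγ w (by positivity)
    _ ≤ _ := by
        apply ENNReal.ofReal_le_ofReal
        have hdecay : (3 * r) ^ γ ≤ (‖c - w‖ + r) ^ γ :=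
          Real.rpow_le_rpow_of_nonpos (by positivity) (by linarith) hγ0
        rw [Real.rpow_add (by positivity), Real.rpow_natCast, mul_pow]
        calc 3 ^ finrank ℝ E * r ^ finrank ℝ E * (3 * r) ^ γ * ∫ x in ball (0 : E) 1, ‖x‖ ^ γ ∂μ
            = 3 ^ finrank ℝ E * (∫ x in ball (0 : E) 1, ‖x‖ ^ γ ∂μ) * r ^ finrank ℝ E *
                (3 * r) ^ γ := by ring
          _ ≤ _ := by gcongr

lemma exists_lintegral_closedBall_norm_sub_rpow_le [Nontrivial E] {γ : ℝ}
    (hγ : -(finrank ℝ E : ℝ) < γ) (hγ0 : γ ≤ 0) :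
    ∃ C : ℝ, 0 < C ∧ ∀ (c w : E) (r : ℝ), 0 < r →
      ∫⁻ x in closedBall c r, ENNReal.ofReal (‖x - w‖ ^ γ) ∂μ ≤
        ENNReal.ofReal (C * r ^ finrank ℝ E * (‖c - w‖ + r) ^ γ) := by
  set K := ∫ x in ball (0 : E) 1, ‖x‖ ^ γ ∂μ
  have hK : 0 ≤ K := setIntegral_nonneg measurableSet_ball fun x _ => by positivity
  have hB : 0 < μ.real (ball 0 1) :=
    ENNReal.toReal_pos (measure_ball_pos μ 0 one_pos).ne' measure_ball_lt_top.ne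
  refine ⟨3 ^ (-γ) * μ.real (ball 0 1) + 3 ^ finrank ℝ E * K, by positivity,
    fun c w r hr => ?_⟩
  rcases le_or_gt (2 * r) ‖c - w‖ with hfar | hnear
  · refine (lintegral_closedBall_norm_sub_rpow_le_of_far μ hγ0 hr hfar).trans
      (ENNReal.ofReal_le_ofReal ?_)
    gcongr
    exact le_add_of_nonneg_right (by positivity)
  · refine (lintegral_closedBall_norm_sub_rpow_le_of_near μ hγ hγ0 hr hnear).trans
      (ENNReal.ofReal_le_ofReal ?_)
    gcongr
    exact le_add_of_nonneg_left (by positivity)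

end Kernel

lemma ofReal_integral_le_lintegral_ofReal {α : Type*} [MeasurableSpace α] {ν : Measure α}
    {f : α → ℝ} (hf : ∀ x, 0 ≤ f x) :
    ENNReal.ofReal (∫ x, f x ∂ν) ≤ ∫⁻ x, ENNReal.ofReal (f x) ∂ν := by
  rw [← Real.enorm_of_nonneg (integral_nonneg hf)]
  simpa only [Real.enorm_of_nonneg (hf _)] using enorm_integral_le_lintegral_enorm f

lemma setIntegral_integral_mul_le_of_lintegral_le {α β : Type*} [MeasurableSpace α]
    [MeasurableSpace β] {μ : Measure α} {ν : Measure β} [SFinite μ] [SFinite ν] {s : Set α}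
    {f K : β → ℝ} {k : α → β → ℝ} (hf0 : ∀ w, 0 ≤ f w) (hf : AEMeasurable f ν)
    (hk0 : ∀ v w, 0 ≤ k v w) (hk : Measurable (Function.uncurry k)) (hK0 : ∀ w, 0 ≤ K w)
    (hkK : ∀ w, ∫⁻ v in s, ENNReal.ofReal (k v w) ∂μ ≤ ENNReal.ofReal (K w))
    (hfK : Integrable (fun w => f w * K w) ν) :
    ∫ v in s, ∫ w, f w * k v w ∂ν ∂μ ≤ ∫ w, f w * K w ∂ν := by
  have hm : AEMeasurable (Function.uncurry fun v w => ENNReal.ofReal (f w * k v w))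
      ((μ.restrict s).prod ν) :=
    ((hf.ennreal_ofReal.comp_snd).mul hk.ennreal_ofReal.aemeasurable).congr
      (ae_of_all _ fun p => (ENNReal.ofReal_mul (hf0 p.2)).symm)
  rw [← ENNReal.ofReal_le_ofReal_iff (integral_nonneg fun w => mul_nonneg (hf0 w) (hK0 w)),
    ofReal_integral_eq_lintegral_ofReal hfK (ae_of_all _ fun w => mul_nonneg (hf0 w) (hK0 w))]
  calc ENNReal.ofReal (∫ v in s, ∫ w, f w * k v w ∂ν ∂μ)
      ≤ ∫⁻ v in s, ∫⁻ w, ENNReal.ofReal (f w * k v w) ∂ν ∂μ :=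
        (ofReal_integral_le_lintegral_ofReal fun v =>
          integral_nonneg fun w => mul_nonneg (hf0 w) (hk0 v w)).trans
        (lintegral_mono fun v => ofReal_integral_le_lintegral_ofReal fun w =>
          mul_nonneg (hf0 w) (hk0 v w))
    _ = ∫⁻ w, ENNReal.ofReal (f w) * ∫⁻ v in s, ENNReal.ofReal (k v w) ∂μ ∂ν := by
        rw [lintegral_lintegral_swap hm]
        refine lintegral_congr fun w => ?_
        simp_rw [ENNReal.ofReal_mul (hf0 w)]
        exact lintegral_const_mul _
          (hk.comp (measurable_id.prodMk measurable_const)).ennreal_ofReal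
    _ ≤ ∫⁻ w, ENNReal.ofReal (f w * K w) ∂ν := lintegral_mono fun w => by
        rw [ENNReal.ofReal_mul (hf0 w)]
        exact mul_le_mul_right (hkK w) _

section Weight

variable {E : Type*} [NormedAddCommGroup E] [MeasurableSpace E]
  {μ : Measure E} {f : E → ℝ} {β r : ℝ} {c : E}

lemma MeasureTheory.Integrable.mul_norm_sub_add_rpow [OpensMeasurableSpace E]
    (hf : Integrable f μ) (hr : 0 < r) (hβ : β ≤ 0) :
    Integrable (fun w => f w * (‖c - w‖ + r) ^ β) μ :=
  hf.mul_bdd (((continuous_const.sub continuous_id).norm.add continuous_const).measurable.pow_const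
    β).aestronglyMeasurable <| ae_of_all _ fun w => by
    rw [Real.norm_of_nonneg (by positivity)]
    exact Real.rpow_le_rpow_of_nonpos hr (le_add_of_nonneg_left (norm_nonneg _)) hβ

lemma integral_mul_norm_sub_add_rpow_le [NullSingletonClass μ] (hf0 : ∀ w, 0 ≤ f w)
    (hβ : β ≤ 0) {v : E} (hv : v ∈ closedBall c r)
    (hg : Integrable (fun w => f w * (‖c - w‖ + r) ^ β) μ)
    (hint : Integrable (fun w => f w * ‖v - w‖ ^ β) μ) :
    ∫ w, f w * (‖c - w‖ + r) ^ β ∂μ ≤ ∫ w, f w * ‖v - w‖ ^ β ∂μ := by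
  refine integral_mono_ae hg hint ?_
  filter_upwards [compl_mem_ae_iff.mpr (measure_singleton v)] with w hw
  have hvw : 0 < ‖v - w‖ := norm_pos_iff.mpr (sub_ne_zero.mpr fun h => hw h.symm)
  refine mul_le_mul_of_nonneg_left (Real.rpow_le_rpow_of_nonpos hvw ?_ hβ) (hf0 w)
  linarith [norm_sub_le_norm_sub_add_norm_sub v c w, mem_closedBall_iff_norm.mp hv]

lemma inv_integral_mul_norm_sub_rpow_le [OpensMeasurableSpace E] [NullSingletonClass μ]
    (hf0 : ∀ w, 0 ≤ f w) (hf : Integrable f μ) (hr : 0 < r) (hβ : β ≤ 0) {v : E}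
    (hv : v ∈ closedBall c r)
    (hA : 0 < ∫ w, f w * (‖c - w‖ + r) ^ β ∂μ) :
    (∫ w, f w * ‖v - w‖ ^ β ∂μ)⁻¹ ≤ (∫ w, f w * (‖c - w‖ + r) ^ β ∂μ)⁻¹ := by
  by_cases hint : Integrable (fun w => f w * ‖v - w‖ ^ β) μ
  · exact inv_anti₀ hA (integral_mul_norm_sub_add_rpow_le hf0 hβ hv
      (hf.mul_norm_sub_add_rpow hr hβ) hint)
  · rw [integral_undef hint, inv_zero]
    exact (inv_pos.mpr hA).le

lemma setIntegral_le_mul_integral_mul_norm_sub_add_rpow [OpensMeasurableSpace E]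
    (hf0 : ∀ w, 0 ≤ f w) (hf : Integrable f μ) (hβ : β ≤ 0) {s : Set E} (hs : MeasurableSet s)
    (hr : 0 < r) (hsub : s ⊆ closedBall c r) :
    ∫ w in s, f w ∂μ ≤ (2 * r) ^ (-β) * ∫ w, f w * (‖c - w‖ + r) ^ β ∂μ := by
  have hg := hf.mul_norm_sub_add_rpow (c := c) hr hβ
  have hpt : ∀ w ∈ s, f w ≤ (2 * r) ^ (-β) * (f w * (‖c - w‖ + r) ^ β) := fun w hw => by
    have hcw : ‖c - w‖ ≤ r := by rw [norm_sub_rev]; exact mem_closedBall_iff_norm.mp (hsub hw)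
    calc f w = (2 * r) ^ (-β) * (f w * (2 * r) ^ β) := by
          rw [Real.rpow_neg (by positivity)]; field_simp
      _ ≤ _ := by
          have := Real.rpow_le_rpow_of_nonpos (by positivity : 0 < ‖c - w‖ + r)
            (by linarith : ‖c - w‖ + r ≤ 2 * r) hβ
          gcongr
          exact hf0 w
  calc ∫ w in s, f w ∂μ ≤ ∫ w in s, (2 * r) ^ (-β) * (f w * (‖c - w‖ + r) ^ β) ∂μ :=
        setIntegral_mono_on hf.integrableOn (hg.const_mul _).integrableOn hs hpt
    _ = (2 * r) ^ (-β) * ∫ w in s, f w * (‖c - w‖ + r) ^ β ∂μ := integral_const_mul _ _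
    _ ≤ _ := mul_le_mul_of_nonneg_left (setIntegral_le_integral hg <| ae_of_all _ fun w =>
        mul_nonneg (hf0 w) (by positivity)) (by positivity)

end Weight

lemma setAverage_le_of_forall_le_s6 {α : Type*} [MeasurableSpace α] {μ : Measure α} {s : Set α}
    (hs : MeasurableSet s) (hμs : μ s ≠ ⊤) {g : α → ℝ} {c : ℝ} (hc : 0 ≤ c)
    (hg : ∀ x ∈ s, g x ≤ c) :
    ⨍ x in s, g x ∂μ ≤ c := by
  by_cases hint : IntegrableOn g s μ
  · rw [setAverage_eq, smul_eq_mul]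
    have hle : ∫ x in s, g x ∂μ ≤ μ.real s * c := by
      simpa only [setIntegral_const, smul_eq_mul] using
        setIntegral_mono_on hint (integrableOn_const hμs) hs hg
    rcases eq_or_lt_of_le (measureReal_nonneg : 0 ≤ μ.real s) with h0 | hpos
    · rw [← h0, inv_zero, zero_mul]; exact hc
    · calc (μ.real s)⁻¹ * ∫ x in s, g x ∂μ ≤ (μ.real s)⁻¹ * (μ.real s * c) := by gcongr
        _ = c := by field_simp
  · rw [setAverage_eq, integral_undef hint, smul_zero]
    exact hc

lemma mul_rpow_half_mul_rpow_half_le {ℓ H I A K : ℝ} (hℓ : 0 < ℓ) (hH : 0 ≤ H) (hI : 0 ≤ I)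
    (hK : 0 ≤ K) (hHA : H ≤ K * A / ℓ ^ 2) (hIA : 0 < A → I ≤ A⁻¹) :
    ℓ * H ^ ((1 : ℝ) / 2) * I ^ ((1 : ℝ) / 2) ≤ K ^ ((1 : ℝ) / 2) := by
  simp only [← Real.sqrt_eq_rpow]
  rw [← Real.sqrt_sq hℓ.le, ← Real.sqrt_mul (sq_nonneg ℓ), ← Real.sqrt_mul (by positivity)]
  refine Real.sqrt_le_sqrt ?_
  rcases le_or_gt A 0 with hA | hA
  · have : H ≤ 0 := hHA.trans (div_nonpos_of_nonpos_of_nonneg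
      (mul_nonpos_of_nonneg_of_nonpos hK hA) (sq_nonneg ℓ))
    rw [le_antisymm this hH, mul_zero, zero_mul]
    exact hK
  · calc ℓ ^ 2 * H * I ≤ ℓ ^ 2 * (K * A / ℓ ^ 2) * A⁻¹ := by gcongr; exact hIA hA
      _ = K := by field_simp

section Cube

variable {d : ℕ}

lemma axisCube_eq_preimage (v₀ : EuclideanSpace ℝ (Fin d)) (ℓ : ℝ) :
    axisCube d v₀ ℓ = (MeasurableEquiv.toLp 2 (Fin d → ℝ)).symm ⁻¹'
      Set.univ.pi fun i => Set.Icc (v₀ i - ℓ / 2) (v₀ i + ℓ / 2) := by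
  ext v
  simp only [axisCube, Set.mem_ofPred_eq, Set.mem_preimage, Set.mem_univ_pi, Set.mem_Icc, abs_le]
  refine forall_congr' fun i => ?_
  change _ ↔ _ ≤ v i ∧ v i ≤ _
  constructor <;> rintro ⟨h₁, h₂⟩ <;> constructor <;> linarith

lemma measurableSet_axisCube (v₀ : EuclideanSpace ℝ (Fin d)) (ℓ : ℝ) :
    MeasurableSet (axisCube d v₀ ℓ) := by
  rw [axisCube_eq_preimage]
  exact (MeasurableEquiv.toLp 2 (Fin d → ℝ)).symm.measurable
    (MeasurableSet.univ_pi fun _ => measurableSet_Icc)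

lemma volume_axisCube (v₀ : EuclideanSpace ℝ (Fin d)) {ℓ : ℝ} (hℓ : 0 ≤ ℓ) :
    volume (axisCube d v₀ ℓ) = ENNReal.ofReal (ℓ ^ d) := by
  rw [axisCube_eq_preimage, (EuclideanSpace.volume_preserving_symm_measurableEquiv_toLp
    (Fin d)).measure_preimage (MeasurableSet.univ_pi fun _ => measurableSet_Icc).nullMeasurableSet,
    volume_pi_pi]
  simp only [Real.volume_Icc, add_sub_sub_cancel, add_halves, Finset.prod_const,
    Finset.card_univ, Fintype.card_fin, ENNReal.ofReal_pow hℓ]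

lemma axisCube_subset_closedBall (v₀ : EuclideanSpace ℝ (Fin d)) {ℓ : ℝ} (hℓ : 0 ≤ ℓ) :
    axisCube d v₀ ℓ ⊆ closedBall v₀ (ℓ * √d / 2) := by
  intro v hv
  rw [mem_closedBall_iff_norm, EuclideanSpace.norm_eq]
  calc √(∑ i, ‖(v - v₀) i‖ ^ 2) ≤ √(∑ _i : Fin d, (ℓ / 2) ^ 2) :=
        Real.sqrt_le_sqrt <| Finset.sum_le_sum fun i _ => by
          rw [Real.norm_eq_abs]
          exact pow_le_pow_left₀ (abs_nonneg _) (hv i) 2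
    _ = ℓ * √d / 2 := by
        rw [Finset.sum_const, Finset.card_univ, Fintype.card_fin, nsmul_eq_mul,
          Real.sqrt_mul (Nat.cast_nonneg d), Real.sqrt_sq (by positivity)]
        ring

lemma setAverage_axisCube (v₀ : EuclideanSpace ℝ (Fin d)) {ℓ : ℝ} (hℓ : 0 ≤ ℓ)
    (g : EuclideanSpace ℝ (Fin d) → ℝ) :
    ⨍ v in axisCube d v₀ ℓ, g v = (ℓ ^ d)⁻¹ * ∫ v in axisCube d v₀ ℓ, g v := by
  rw [setAverage_eq, measureReal_def, volume_axisCube v₀ hℓ,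
    ENNReal.toReal_ofReal (by positivity), smul_eq_mul]

end Cube

/-- The reaction coefficient `h_{f,γ}` of the Landau operator, without the constant `c(d,γ)`. -/
noncomputable def reactionCoeff (d : ℕ) (γ : ℝ) (f : EuclideanSpace ℝ (Fin d) → ℝ)
    (v : EuclideanSpace ℝ (Fin d)) : ℝ :=
  if γ = -(d : ℝ) then f v else ∫ w, f w * ‖v - w‖ ^ γ

lemma reactionCoeff_nonneg {d : ℕ} {γ : ℝ} {f : EuclideanSpace ℝ (Fin d) → ℝ}
    (hf0 : ∀ w, 0 ≤ f w) (v : EuclideanSpace ℝ (Fin d)) : 0 ≤ reactionCoeff d γ f v := by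
  unfold reactionCoeff
  split_ifs
  · exact hf0 v
  · exact integral_nonneg fun w => mul_nonneg (hf0 w) (by positivity)

lemma pow_mul_rpow_le_pow_sub_two_mul_rpow {r X γ : ℝ} {n : ℕ} (hr : 0 < r) (hrX : r ≤ X)
    (hn : 2 ≤ n) :
    r ^ n * X ^ γ ≤ r ^ (n - 2) * X ^ (2 + γ) := by
  have hX : 0 < X := hr.trans_le hrX
  rw [Real.rpow_add hX, Real.rpow_two, ← pow_sub_mul_pow r hn]
  have : r ^ 2 ≤ X ^ 2 := pow_le_pow_left₀ hr.le hrX 2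
  have : 0 ≤ X ^ γ := by positivity
  calc r ^ (n - 2) * r ^ 2 * X ^ γ ≤ r ^ (n - 2) * X ^ 2 * X ^ γ := by gcongr
    _ = _ := by ring

lemma exists_setIntegral_reactionCoeff_le {d : ℕ} (hd : 3 ≤ d) {γ : ℝ} (hγ₁ : -(d : ℝ) ≤ γ)
    (hγ₂ : γ ≤ -2) :
    ∃ C : ℝ, 0 < C ∧ ∀ f : EuclideanSpace ℝ (Fin d) → ℝ, (∀ w, 0 ≤ f w) → Integrable f →
      ∀ (s : Set (EuclideanSpace ℝ (Fin d))) (c : EuclideanSpace ℝ (Fin d)) (r : ℝ),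
        MeasurableSet s → 0 < r → s ⊆ closedBall c r →
          ∫ v in s, reactionCoeff d γ f v ≤
            C * r ^ (d - 2) * ∫ w, f w * (‖c - w‖ + r) ^ (2 + γ) := by
  have : NeZero d := ⟨by omega⟩
  rcases hγ₁.eq_or_lt with rfl | hγ
  · refine ⟨2 ^ (d - 2), by positivity, fun f hf0 hf s c r hs hr hsub => ?_⟩
    have hexp : -(2 + -(d : ℝ)) = ((d - 2 : ℕ) : ℝ) := by
      rw [Nat.cast_sub (by omega)]; push_cast; ring
    simp only [reactionCoeff, if_true]
    refine (setIntegral_le_mul_integral_mul_norm_sub_add_rpow hf0 hf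
      (by linarith : 2 + -(d : ℝ) ≤ 0) hs hr hsub (c := c)).trans_eq ?_
    rw [hexp, Real.rpow_natCast, mul_pow]
  · obtain ⟨C, hC, hker⟩ := exists_lintegral_closedBall_norm_sub_rpow_le
      (volume : Measure (EuclideanSpace ℝ (Fin d))) (by rwa [finrank_euclideanSpace_fin])
      (by linarith)
    rw [finrank_euclideanSpace_fin] at hker
    refine ⟨C, hC, fun f hf0 hf s c r hs hr hsub => ?_⟩
    simp only [reactionCoeff, if_neg hγ.ne']
    have hK : ∀ w, ∫⁻ v in s, ENNReal.ofReal (‖v - w‖ ^ γ) ≤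
        ENNReal.ofReal (C * r ^ (d - 2) * (‖c - w‖ + r) ^ (2 + γ)) := fun w =>
      (lintegral_mono_set hsub).trans <| (hker c w r hr).trans <| ENNReal.ofReal_le_ofReal <| by
        rw [mul_assoc, mul_assoc]
        exact mul_le_mul_of_nonneg_left (pow_mul_rpow_le_pow_sub_two_mul_rpow hr
          (le_add_of_nonneg_left (norm_nonneg _)) (by omega)) hC.le
    have hfK := (hf.mul_norm_sub_add_rpow (c := c) hr (by linarith : 2 + γ ≤ 0)).const_mul
      (C * r ^ (d - 2))
    refine (setIntegral_integral_mul_le_of_lintegral_le (k := fun v w => ‖v - w‖ ^ γ) hf0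
      hf.aemeasurable (fun v w => by positivity)
      ((measurable_fst.sub measurable_snd).norm.pow_const γ) (fun w => by positivity) hK
      (by simpa only [mul_left_comm] using hfK)).trans_eq ?_
    rw [← integral_const_mul]
    simp only [mul_left_comm]

/-- For `d ≥ 3`, `γ ∈ [-d,-2]`, the reaction coefficient `h_{f,γ}` (equal to `f` if `γ = -d`
and to `f * |v|^γ` otherwise) and the diffusion trace `a_{f,γ} = f * |v|^{2+γ}` satisfy
`|Q|^{1/d} (⨍_Q h)^{1/2} (⨍_Q a⁻¹)^{1/2} ≤ C(d,γ)` on every cube `Q`. -/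
theorem landau_h_over_a_cube_bound (d : ℕ) (hd : 3 ≤ d) (γ : ℝ)
    (hγ₁ : -(d : ℝ) ≤ γ) (hγ₂ : γ ≤ -2) :
    ∃ C : ℝ, 0 < C ∧
      ∀ f : EuclideanSpace ℝ (Fin d) → ℝ, (∀ v, 0 ≤ f v) → Integrable f →
        ∀ (v₀ : EuclideanSpace ℝ (Fin d)) (ℓ : ℝ), 0 < ℓ →
          ℓ * (⨍ v in axisCube d v₀ ℓ,
                (if γ = -(d : ℝ) then f v else ∫ w, f w * ‖v - w‖ ^ γ)) ^ ((1 : ℝ) / 2) *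
            (⨍ v in axisCube d v₀ ℓ, (∫ w, f w * ‖v - w‖ ^ (2 + γ))⁻¹) ^ ((1 : ℝ) / 2) ≤ C := by
  have : NeZero d := ⟨by omega⟩
  obtain ⟨C, hC, hreaction⟩ := exists_setIntegral_reactionCoeff_le hd hγ₁ hγ₂
  refine ⟨(C * (√d / 2) ^ (d - 2)) ^ ((1 : ℝ) / 2), by positivity,
    fun f hf0 hf v₀ ℓ hℓ => ?_⟩
  set r := ℓ * √d / 2 with hr_def
  have hr : 0 < r := by positivity
  have hQ := axisCube_subset_closedBall v₀ hℓ.le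
  have hQm := measurableSet_axisCube v₀ ℓ
  set A := ∫ w, f w * (‖v₀ - w‖ + r) ^ (2 + γ)
  have hh : ⨍ v in axisCube d v₀ ℓ, reactionCoeff d γ f v ≤ C * (√d / 2) ^ (d - 2) * A / ℓ ^ 2 := by
    rw [setAverage_axisCube v₀ hℓ.le]
    calc (ℓ ^ d)⁻¹ * ∫ v in axisCube d v₀ ℓ, reactionCoeff d γ f v
        ≤ (ℓ ^ d)⁻¹ * (C * r ^ (d - 2) * A) := by
          gcongr
          exact hreaction f hf0 hf _ v₀ r hQm hr hQ
      _ = _ := by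
          rw [hr_def, ← pow_sub_mul_pow ℓ (by omega : 2 ≤ d)]
          field_simp
          ring
  have ha : 0 < A → ⨍ v in axisCube d v₀ ℓ, (∫ w, f w * ‖v - w‖ ^ (2 + γ))⁻¹ ≤ A⁻¹ :=
    fun hA => setAverage_le_of_forall_le_s6 hQm (by simp [volume_axisCube v₀ hℓ.le])
      (inv_nonneg.mpr hA.le) fun v hv =>
        inv_integral_mul_norm_sub_rpow_le hf0 hf hr (by linarith) (hQ hv) hA
  exact mul_rpow_half_mul_rpow_half_le hℓ (integral_nonneg (reactionCoeff_nonneg hf0))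
    (integral_nonneg fun v => inv_nonneg.mpr <|
      integral_nonneg fun w => mul_nonneg (hf0 w) (by positivity))
    (by positivity) hh ha
end

section
/- Let p > 1 and h ≥ 1. Define χ_h(u) = ∫₀^u χ(s−h) ds where χ is smooth, 0 ≤ χ ≤ 1, χ = 1 on (−∞,0], χ = 0 on [1,∞), and −2 ≤ χ' ≤ 0; then set φ(u) = ∫₀^u χ_h(s)^{p−1} ds, φ̄(u) = ∫₀^u (φ''(s))^{1/2} ds, and φ_(u) = ∫₀^u s·φ''(s) ds. Then: (i) u·φ'(u) − φ_(u) = φ(u) for all u ≥ 0; (ii) φ̄(u) = (2/p)(p−1)^{1/2}·u^{p/2} and φ_(u) = ((p−1)/p)·u^p for u ≤ h; (iii) if h ≥ h(p) (where h(p) is such that p·h^{-1}(1+h^{-1})^{p−1} ≤ 1 for h ≥ h(p)), then φ_(u) ≤ (p/2)·φ̄(u)² and φ̄(u)² ≤ (8(p−1)/p)·φ(u) for all u ≥ 0. -/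
open MeasureTheory intervalIntegral

/-- `χ_h(u) = ∫₀^u χ(s-h) ds`, a smooth approximation of `min{u, h+1}`. -/
noncomputable def chiTrunc (χ : ℝ → ℝ) (h : ℝ) (u : ℝ) : ℝ :=
  ∫ s in (0 : ℝ)..u, χ (s - h)

/-- `φ(u) = ∫₀^u χ_h(s)^{p-1} ds`, a truncated approximation of `u^p/p`. -/
noncomputable def phiTrunc (χ : ℝ → ℝ) (p h : ℝ) (u : ℝ) : ℝ :=
  ∫ s in (0 : ℝ)..u, chiTrunc χ h s ^ (p - 1)

/-- `φ̄(u) = ∫₀^u (φ''(s))^{1/2} ds`. -/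
noncomputable def phiBar (χ : ℝ → ℝ) (p h : ℝ) (u : ℝ) : ℝ :=
  ∫ s in (0 : ℝ)..u, Real.sqrt (deriv (deriv (phiTrunc χ p h)) s)

/-- `φ_(u) = ∫₀^u s φ''(s) ds`. -/
noncomputable def phiUnder (χ : ℝ → ℝ) (p h : ℝ) (u : ℝ) : ℝ :=
  ∫ s in (0 : ℝ)..u, s * deriv (deriv (phiTrunc χ p h)) s

/-- The explicit second derivative of `phiTrunc` (away from `0`). -/
private noncomputable def gg (χ : ℝ → ℝ) (p h : ℝ) (s : ℝ) : ℝ :=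
  (p - 1) * chiTrunc χ h s ^ (p - 2) * χ (s - h)

/-- Nice version of `phiBar`. -/
private noncomputable def auxB (χ : ℝ → ℝ) (p h : ℝ) (u : ℝ) : ℝ :=
  ∫ s in (0 : ℝ)..u, Real.sqrt (gg χ p h s)

/-- Nice version of `phiUnder`. -/
private noncomputable def UU (χ : ℝ → ℝ) (p h : ℝ) (u : ℝ) : ℝ :=
  ∫ s in (0 : ℝ)..u, s * gg χ p h s

private lemma mono_aux {F F' : ℝ → ℝ} {u : ℝ} (hu : 0 ≤ u)
    (hc : ContinuousOn F (Set.Icc 0 u))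
    (hd : ∀ x ∈ Set.Ioo (0 : ℝ) u, HasDerivAt F (F' x) x)
    (hn : ∀ x ∈ Set.Ioo (0 : ℝ) u, 0 ≤ F' x) : F 0 ≤ F u := by
  rcases eq_or_lt_of_le hu with rfl | hu'
  · exact le_rfl
  · have hm := monotoneOn_of_deriv_nonneg (convex_Icc (0 : ℝ) u) hc
      (fun x hx => by
        rw [interior_Icc] at hx
        exact (hd x hx).differentiableAt.differentiableWithinAt)
      (fun x hx => by
        rw [interior_Icc] at hx
        rw [(hd x hx).deriv]
        exact hn x hx)
    exact hm (Set.left_mem_Icc.2 hu) (Set.right_mem_Icc.2 hu) hu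

set_option maxHeartbeats 4000000 in
/-- Structural identities for the truncated power approximations: (i) `uφ'(u) - φ_(u) = φ(u)`;
(ii) for `u ≤ h`, `φ̄(u) = (2/p)√(p-1) u^{p/2}` and `φ_(u) = ((p-1)/p) u^p`; (iii) if
`p h⁻¹ (1+h⁻¹)^{p-1} ≤ 1` then `φ_(u) ≤ (p/2) φ̄(u)²` and `φ̄(u)² ≤ (8(p-1)/p) φ(u)` for all
`u ≥ 0`. -/
theorem truncated_power_identities (p h : ℝ) (hp : 1 < p) (hh : 1 ≤ h)
    (χ : ℝ → ℝ) (hχsmooth : ContDiff ℝ (⊤ : ℕ∞) χ)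
    (hχ01 : ∀ s, 0 ≤ χ s ∧ χ s ≤ 1)
    (hχ1 : ∀ s, s ≤ 0 → χ s = 1) (hχ0 : ∀ s, 1 ≤ s → χ s = 0)
    (hχ' : ∀ s, -2 ≤ deriv χ s ∧ deriv χ s ≤ 0) :
    (∀ u, 0 ≤ u →
        u * deriv (phiTrunc χ p h) u - phiUnder χ p h u = phiTrunc χ p h u) ∧
    (∀ u, 0 ≤ u → u ≤ h →
        phiBar χ p h u = (2 / p) * Real.sqrt (p - 1) * u ^ (p / 2) ∧
        phiUnder χ p h u = ((p - 1) / p) * u ^ p) ∧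
    (p * h⁻¹ * (1 + h⁻¹) ^ (p - 1) ≤ 1 →
      ∀ u, 0 ≤ u →
        phiUnder χ p h u ≤ (p / 2) * phiBar χ p h u ^ 2 ∧
        phiBar χ p h u ^ 2 ≤ (8 * (p - 1) / p) * phiTrunc χ p h u) := by
  have hp0 : (0 : ℝ) < p := by linarith
  have hp1 : (0 : ℝ) < p - 1 := by linarith
  have hh0 : (0 : ℝ) < h := by linarith
  have hχc : Continuous χ := hχsmooth.continuous
  have hχshift : Continuous fun s : ℝ => χ (s - h) :=
    hχc.comp (continuous_id.sub continuous_const)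
  -- basic facts about f := chiTrunc χ h
  have hfd : ∀ u : ℝ, HasDerivAt (chiTrunc χ h) (χ (u - h)) u := fun u =>
    (hχshift.integral_hasStrictDerivAt 0 u).hasDerivAt
  have hfc : Continuous (chiTrunc χ h) :=
    continuous_iff_continuousAt.2 fun u => (hfd u).continuousAt
  have hfadd : ∀ a b : ℝ, chiTrunc χ h b = chiTrunc χ h a + ∫ s in a..b, χ (s - h) := by
    intro a b
    rw [chiTrunc, chiTrunc,
      integral_add_adjacent_intervals (hχshift.intervalIntegrable 0 a)
        (hχshift.intervalIntegrable a b)]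
  have hfmono : Monotone (chiTrunc χ h) := by
    intro a b hab
    rw [hfadd a b]
    have : 0 ≤ ∫ s in a..b, χ (s - h) :=
      integral_nonneg hab fun x _ => (hχ01 _).1
    linarith
  have hfid : ∀ s : ℝ, s ≤ h → chiTrunc χ h s = s := by
    intro s hs
    have he : ∀ t ∈ Set.uIcc (0 : ℝ) s, χ (t - h) = (fun _ : ℝ => (1 : ℝ)) t := by
      intro t ht
      have ht2 : t ≤ max 0 s := ht.2
      have : t ≤ h := le_trans ht2 (max_le hh0.le hs)
      exact hχ1 _ (by linarith)
    rw [chiTrunc, integral_congr he]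
    simp
  have hf0 : chiTrunc χ h 0 = 0 := by rw [hfid 0 hh0.le]
  have hfnn : ∀ s : ℝ, 0 ≤ s → 0 ≤ chiTrunc χ h s := by
    intro s hs
    rw [← hf0]
    exact hfmono hs
  have hfle : ∀ s : ℝ, 0 ≤ s → chiTrunc χ h s ≤ s := by
    intro s hs
    calc chiTrunc χ h s ≤ ∫ _ in (0 : ℝ)..s, (1 : ℝ) := by
          apply integral_mono_on hs (hχshift.intervalIntegrable 0 s)
            intervalIntegrable_const
          intro x _
          exact (hχ01 _).2
      _ = s := by simp
  have hfub : ∀ s : ℝ, chiTrunc χ h s ≤ h + 1 := by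
    intro s
    rcases le_total s (h + 1) with hs | hs
    · calc chiTrunc χ h s ≤ chiTrunc χ h (h + 1) := hfmono hs
        _ ≤ h + 1 := hfle _ (by linarith)
    · rw [hfadd (h + 1) s]
      have hz : ∀ t ∈ Set.uIcc (h + 1) s, χ (t - h) = (fun _ : ℝ => (0 : ℝ)) t := by
        intro t ht
        have ht1 : min (h + 1) s ≤ t := ht.1
        have : h + 1 ≤ t := by rw [min_eq_left hs] at ht1; exact ht1
        exact hχ0 _ (by linarith)
      rw [integral_congr hz]
      simp only [intervalIntegral.integral_zero, add_zero]
      exact hfle _ (by linarith)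
  have hflb : ∀ s : ℝ, h ≤ s → h ≤ chiTrunc χ h s := by
    intro s hs
    calc h = chiTrunc χ h h := (hfid h le_rfl).symm
      _ ≤ chiTrunc χ h s := hfmono hs
  have hfpos : ∀ s : ℝ, 0 < s → 0 < chiTrunc χ h s := by
    intro s hs
    rcases le_total s h with h1 | h1
    · rw [hfid s h1]; exact hs
    · exact lt_of_lt_of_le hh0 (hflb s h1)
  -- first derivative of phiTrunc
  have hF1c : Continuous fun s : ℝ => chiTrunc χ h s ^ (p - 1) :=
    continuous_iff_continuousAt.2 fun x =>
      (Real.continuousAt_rpow_const _ _ (Or.inr hp1.le)).comp hfc.continuousAt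
  have hPd : ∀ u : ℝ, HasDerivAt (phiTrunc χ p h) (chiTrunc χ h u ^ (p - 1)) u := fun u =>
    (hF1c.integral_hasStrictDerivAt 0 u).hasDerivAt
  have hPc : Continuous (phiTrunc χ p h) :=
    continuous_iff_continuousAt.2 fun u => (hPd u).continuousAt
  have hP' : deriv (phiTrunc χ p h) = fun u => chiTrunc χ h u ^ (p - 1) :=
    funext fun u => (hPd u).deriv
  -- second derivative
  have hF1d : ∀ x : ℝ, 0 < x →
      HasDerivAt (fun s => chiTrunc χ h s ^ (p - 1)) (gg χ p h x) x := by
    intro x hx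
    have hd := (hfd x).rpow_const (p := p - 1) (Or.inl (hfpos x hx).ne')
    convert hd using 1
    rw [gg, show p - 1 - 1 = p - 2 by ring]
    ring
  have hphi'' : ∀ x : ℝ, 0 < x → deriv (deriv (phiTrunc χ p h)) x = gg χ p h x := by
    intro x hx
    rw [hP']
    exact (hF1d x hx).deriv
  -- pointwise descriptions of gg
  have hgnn : ∀ s : ℝ, 0 ≤ s → 0 ≤ gg χ p h s := by
    intro s hs
    exact mul_nonneg (mul_nonneg hp1.le (Real.rpow_nonneg (hfnn s hs) _)) (hχ01 _).1
  have hgid : ∀ s : ℝ, 0 ≤ s → s ≤ h → gg χ p h s = (p - 1) * s ^ (p - 2) := by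
    intro s h0 h1
    rw [gg, hfid s h1, hχ1 _ (by linarith), mul_one]
  have sg_eq : ∀ s : ℝ, 0 ≤ s → s ≤ h →
      Real.sqrt (gg χ p h s) = Real.sqrt (p - 1) * s ^ ((p - 2) / 2) := by
    intro s h0 h1
    rw [hgid s h0 h1, Real.sqrt_mul hp1.le, Real.sqrt_eq_rpow (s ^ (p - 2)),
      ← Real.rpow_mul h0, show (p - 2) * (1 / 2) = (p - 2) / 2 by ring]
  have sgm_eq : ∀ s : ℝ, 0 ≤ s → s ≤ h → s * gg χ p h s = (p - 1) * s ^ (p - 1) := by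
    intro s h0 h1
    rw [hgid s h0 h1]
    rcases eq_or_lt_of_le h0 with heq | h0'
    · rw [← heq, Real.zero_rpow hp1.ne']
      ring
    · rw [show p - 1 = p - 2 + 1 by ring, Real.rpow_add_one h0'.ne']
      ring
  have sg_le : ∀ s : ℝ, 0 ≤ s →
      Real.sqrt (gg χ p h s) ≤ Real.sqrt (p - 1) * chiTrunc χ h s ^ ((p - 2) / 2) := by
    intro s hs
    have e1 : Real.sqrt (gg χ p h s)
        = Real.sqrt ((p - 1) * chiTrunc χ h s ^ (p - 2)) * Real.sqrt (χ (s - h)) := by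
      rw [gg, Real.sqrt_mul (mul_nonneg hp1.le (Real.rpow_nonneg (hfnn s hs) _))]
    have e2 : Real.sqrt ((p - 1) * chiTrunc χ h s ^ (p - 2))
        = Real.sqrt (p - 1) * chiTrunc χ h s ^ ((p - 2) / 2) := by
      rw [Real.sqrt_mul hp1.le, Real.sqrt_eq_rpow (chiTrunc χ h s ^ (p - 2)),
        ← Real.rpow_mul (hfnn s hs), show (p - 2) * (1 / 2) = (p - 2) / 2 by ring]
    rw [e1, e2]
    have h3 : Real.sqrt (χ (s - h)) ≤ 1 := Real.sqrt_le_one.2 (hχ01 _).2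
    have h4 : 0 ≤ Real.sqrt (p - 1) * chiTrunc χ h s ^ ((p - 2) / 2) :=
      mul_nonneg (Real.sqrt_nonneg _) (Real.rpow_nonneg (hfnn s hs) _)
    calc Real.sqrt (p - 1) * chiTrunc χ h s ^ ((p - 2) / 2) * Real.sqrt (χ (s - h))
        ≤ Real.sqrt (p - 1) * chiTrunc χ h s ^ ((p - 2) / 2) * 1 :=
          mul_le_mul_of_nonneg_left h3 h4
      _ = _ := by ring
  -- continuity of the nice integrands away from 0
  have hgca : ∀ s : ℝ, 0 < s → ContinuousAt (gg χ p h) s := by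
    intro s hs
    have h1 : ContinuousAt (fun y : ℝ => y ^ (p - 2)) (chiTrunc χ h s) :=
      Real.continuousAt_rpow_const _ _ (Or.inl (hfpos s hs).ne')
    exact (continuousAt_const.mul (h1.comp hfc.continuousAt)).mul hχshift.continuousAt
  have sqg_ca : ∀ s : ℝ, 0 < s → ContinuousAt (fun t => Real.sqrt (gg χ p h t)) s :=
    fun s hs => Real.continuous_sqrt.continuousAt.comp (hgca s hs)
  have sgm_ca : ∀ s : ℝ, 0 < s → ContinuousAt (fun t => t * gg χ p h t) s :=
    fun s hs => continuousAt_id.mul (hgca s hs)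
  -- interval integrability
  have ig1 : ∀ u : ℝ, 0 ≤ u →
      IntervalIntegrable (fun s => Real.sqrt (gg χ p h s)) volume 0 u := by
    have base : ∀ v : ℝ, 0 ≤ v → v ≤ h →
        IntervalIntegrable (fun s => Real.sqrt (gg χ p h s)) volume 0 v := by
      intro v h0 h1
      have hnice : IntervalIntegrable (fun s : ℝ => Real.sqrt (p - 1) * s ^ ((p - 2) / 2))
          volume 0 v := (intervalIntegrable_rpow' (by linarith)).const_mul _
      rw [intervalIntegrable_iff] at hnice ⊢
      refine hnice.congr_fun ?_ measurableSet_uIoc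
      intro s hs
      rw [Set.uIoc_of_le h0] at hs
      exact (sg_eq s hs.1.le (le_trans hs.2 h1)).symm
    intro u hu
    rcases le_total u h with h1 | h1
    · exact base u hu h1
    · refine (base h hh0.le le_rfl).trans ?_
      apply ContinuousOn.intervalIntegrable
      intro s hs
      rw [Set.uIcc_of_le h1] at hs
      exact (sqg_ca s (lt_of_lt_of_le hh0 hs.1)).continuousWithinAt
  have ig2 : ∀ u : ℝ, 0 ≤ u →
      IntervalIntegrable (fun s => s * gg χ p h s) volume 0 u := by
    have base : ∀ v : ℝ, 0 ≤ v → v ≤ h →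
        IntervalIntegrable (fun s => s * gg χ p h s) volume 0 v := by
      intro v h0 h1
      have hnice : IntervalIntegrable (fun s : ℝ => (p - 1) * s ^ (p - 1))
          volume 0 v := (intervalIntegrable_rpow' (by linarith)).const_mul _
      rw [intervalIntegrable_iff] at hnice ⊢
      refine hnice.congr_fun ?_ measurableSet_uIoc
      intro s hs
      rw [Set.uIoc_of_le h0] at hs
      exact (sgm_eq s hs.1.le (le_trans hs.2 h1)).symm
    intro u hu
    rcases le_total u h with h1 | h1
    · exact base u hu h1
    · refine (base h hh0.le le_rfl).trans ?_
      apply ContinuousOn.intervalIntegrable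
      intro s hs
      rw [Set.uIcc_of_le h1] at hs
      exact (sgm_ca s (lt_of_lt_of_le hh0 hs.1)).continuousWithinAt
  have ig1seg : ∀ a b : ℝ, 0 < a → 0 < b →
      IntervalIntegrable (fun s => Real.sqrt (gg χ p h s)) volume a b := by
    intro a b ha hb
    apply ContinuousOn.intervalIntegrable
    intro s hs
    have : 0 < s := lt_of_lt_of_le (lt_min ha hb) hs.1
    exact (sqg_ca s this).continuousWithinAt
  -- identification of phiBar and phiUnder with the nice versions
  have phiBar_eq : ∀ u : ℝ, 0 ≤ u → phiBar χ p h u = auxB χ p h u := by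
    intro u hu
    apply intervalIntegral.integral_congr_ae
    filter_upwards with s hs
    rw [Set.uIoc_of_le hu] at hs
    rw [hphi'' s hs.1]
  have phiUnder_eq : ∀ u : ℝ, 0 ≤ u → phiUnder χ p h u = UU χ p h u := by
    intro u hu
    apply intervalIntegral.integral_congr_ae
    filter_upwards with s hs
    rw [Set.uIoc_of_le hu] at hs
    rw [hphi'' s hs.1]
  -- derivatives of auxB and UU
  have hBd : ∀ x : ℝ, 0 < x → HasDerivAt (auxB χ p h) (Real.sqrt (gg χ p h x)) x := by
    intro x hx
    refine integral_hasDerivAt_right (ig1 x hx.le) ?_ (sqg_ca x hx)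
    exact ContinuousOn.stronglyMeasurableAtFilter isOpen_Ioi
      (fun s hs => (sqg_ca s hs).continuousWithinAt) x hx
  have hUd : ∀ x : ℝ, 0 < x → HasDerivAt (UU χ p h) (x * gg χ p h x) x := by
    intro x hx
    refine integral_hasDerivAt_right (ig2 x hx.le) ?_ (sgm_ca x hx)
    exact ContinuousOn.stronglyMeasurableAtFilter isOpen_Ioi
      (fun s hs => (sgm_ca s hs).continuousWithinAt) x hx
  -- continuity of auxB and UU on [0, u]
  have hBc : ∀ u : ℝ, 0 ≤ u → ContinuousOn (auxB χ p h) (Set.Icc 0 u) := by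
    intro u hu
    have := continuousOn_primitive_interval'
      (ig1 u hu) (Set.left_mem_uIcc (a := (0:ℝ)) (b := u))
    rwa [Set.uIcc_of_le hu] at this
  have hUc : ∀ u : ℝ, 0 ≤ u → ContinuousOn (UU χ p h) (Set.Icc 0 u) := by
    intro u hu
    have := continuousOn_primitive_interval'
      (ig2 u hu) (Set.left_mem_uIcc (a := (0:ℝ)) (b := u))
    rwa [Set.uIcc_of_le hu] at this
  -- values of auxB and UU on [0, h]
  have Bval : ∀ u : ℝ, 0 ≤ u → u ≤ h →
      auxB χ p h u = 2 / p * Real.sqrt (p - 1) * u ^ (p / 2) := by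
    intro u h0 h1
    have heq : auxB χ p h u = ∫ s in (0:ℝ)..u, Real.sqrt (p - 1) * s ^ ((p - 2) / 2) := by
      apply integral_congr
      intro s hs
      rw [Set.uIcc_of_le h0] at hs
      exact sg_eq s hs.1 (le_trans hs.2 h1)
    rw [heq, intervalIntegral.integral_const_mul, integral_rpow (Or.inl (by linarith)),
      show (p - 2) / 2 + 1 = p / 2 by ring, Real.zero_rpow (div_ne_zero hp0.ne' two_ne_zero)]
    field_simp
    ring
  have Uval : ∀ u : ℝ, 0 ≤ u → u ≤ h →
      UU χ p h u = (p - 1) / p * u ^ p := by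
    intro u h0 h1
    have heq : UU χ p h u = ∫ s in (0:ℝ)..u, (p - 1) * s ^ (p - 1) := by
      apply integral_congr
      intro s hs
      rw [Set.uIcc_of_le h0] at hs
      exact sgm_eq s hs.1 (le_trans hs.2 h1)
    rw [heq, intervalIntegral.integral_const_mul, integral_rpow (Or.inl (by linarith)),
      show p - 1 + 1 = p by ring, Real.zero_rpow hp0.ne']
    field_simp
    ring
  have hB0 : auxB χ p h 0 = 0 := integral_same
  have hU0 : UU χ p h 0 = 0 := integral_same
  have hP0 : phiTrunc χ p h 0 = 0 := integral_same
  have hBnn : ∀ x : ℝ, 0 ≤ x → 0 ≤ auxB χ p h x := fun x hx =>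
    integral_nonneg hx fun s _ => Real.sqrt_nonneg _
  -- Part (i)
  have part1 : ∀ u : ℝ, 0 ≤ u →
      u * deriv (phiTrunc χ p h) u - phiUnder χ p h u = phiTrunc χ p h u := by
    intro u hu
    rw [phiUnder_eq u hu]
    simp only [hP']
    set FF : ℝ → ℝ := fun x => x * chiTrunc χ h x ^ (p - 1) - UU χ p h x - phiTrunc χ p h x
      with hFFdef
    have hcont : ContinuousOn FF (Set.Icc 0 u) :=
      (((continuous_id.mul hF1c).continuousOn).sub (hUc u hu)).sub hPc.continuousOn
    have hder : ∀ x ∈ Set.Ioo (0:ℝ) u, HasDerivAt FF ((fun _ => (0:ℝ)) x) x := by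
      intro x hx
      have h1 : HasDerivAt (fun y : ℝ => y * chiTrunc χ h y ^ (p - 1))
          (1 * chiTrunc χ h x ^ (p - 1) + x * gg χ p h x) x :=
        (hasDerivAt_id x).mul (hF1d x hx.1)
      have h2 := (h1.sub (hUd x hx.1)).sub (hPd x)
      have he : 1 * chiTrunc χ h x ^ (p - 1) + x * gg χ p h x - x * gg χ p h x
          - chiTrunc χ h x ^ (p - 1) = 0 := by ring
      rw [he] at h2
      exact h2
    have e1 := mono_aux hu hcont hder fun x hx => le_rfl
    have e2 := mono_aux (F := fun x => -FF x) (F' := fun _ => (0:ℝ)) hu hcont.neg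
      (fun x hx => by have h := (hder x hx).neg; simp only [neg_zero] at h; exact h) fun x hx => le_rfl
    have e2' : -FF 0 ≤ -FF u := e2
    have hFF0 : FF 0 = 0 := by
      simp only [hFFdef]
      rw [hU0, hP0]
      ring
    have hFFu : FF u = 0 := by
      have := le_antisymm (by linarith [e2'] : FF u ≤ FF 0) e1
      rw [this, hFF0]
    simp only [hFFdef] at hFFu
    linarith
  refine ⟨part1, ?_, ?_⟩
  · -- Part (ii)
    intro u h0 h1
    exact ⟨by rw [phiBar_eq u h0, Bval u h0 h1], by rw [phiUnder_eq u h0, Uval u h0 h1]⟩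
  · -- Part (iii)
    intro hyp
    have hinv : (0:ℝ) < h⁻¹ := inv_pos.2 hh0
    have h1e : (1:ℝ) ≤ (1 + h⁻¹) ^ (p - 1) := Real.one_le_rpow (by linarith) (by linarith)
    have hph : p ≤ h := by
      have h3 : p * h⁻¹ ≤ 1 := by nlinarith
      have h4 : p * h⁻¹ * h ≤ 1 * h := mul_le_mul_of_nonneg_right h3 hh0.le
      rw [mul_assoc, inv_mul_cancel₀ hh0.ne'] at h4
      linarith
    have hexp : (1 + h⁻¹) ^ (p / 2) ≤ 2 := by
      rw [Real.rpow_def_of_pos (by linarith)]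
      have hlog : Real.log (1 + h⁻¹) ≤ h⁻¹ := by
        have := Real.log_le_sub_one_of_pos (show (0:ℝ) < 1 + h⁻¹ by linarith)
        linarith
      have hl0 : 0 ≤ Real.log (1 + h⁻¹) := Real.log_nonneg (by linarith)
      have hph' : p * h⁻¹ ≤ 1 := by nlinarith
      have hle : Real.log (1 + h⁻¹) * (p / 2) ≤ 1 / 2 := by nlinarith
      have hE : Real.exp (Real.log (1 + h⁻¹) * (p / 2)) ≤ Real.exp (1/2) :=
        Real.exp_le_exp.2 hle
      have hE2 : Real.exp (1/2) * Real.exp (1/2) = Real.exp 1 := by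
        rw [← Real.exp_add]; norm_num
      nlinarith [Real.exp_pos ((1:ℝ)/2), Real.exp_one_lt_d9]
    have hhp2 : (h + 1) ^ (p / 2) ≤ 2 * h ^ (p / 2) := by
      have he : h + 1 = h * (1 + h⁻¹) := by field_simp
      rw [he, Real.mul_rpow hh0.le (by linarith)]
      nlinarith [Real.rpow_pos_of_pos hh0 (p / 2),
        Real.rpow_nonneg (show (0:ℝ) ≤ 1 + h⁻¹ by linarith) (p / 2)]
    have hhe : h ^ ((p - 2) / 2) * h = h ^ (p / 2) := by
      rw [show p / 2 = (p - 2) / 2 + 1 by ring, Real.rpow_add_one hh0.ne']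
    have hh1e : (h + 1) ^ ((p - 2) / 2) * (h + 1) = (h + 1) ^ (p / 2) := by
      rw [show p / 2 = (p - 2) / 2 + 1 by ring,
        Real.rpow_add_one (show (h:ℝ) + 1 ≠ 0 by linarith)]
    have fMa : ∀ s : ℝ, h ≤ s → s ≤ h + 1 →
        s * chiTrunc χ h s ^ ((p - 2) / 2) ≤ 2 * h ^ (p / 2) := by
      intro s h1 h2
      have hs0 : (0:ℝ) ≤ s := by linarith
      have hfs : 0 ≤ chiTrunc χ h s ^ ((p - 2) / 2) := Real.rpow_nonneg (hfnn s hs0) _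
      rcases le_total p 2 with hp2 | hp2
      · have e1 : chiTrunc χ h s ^ ((p - 2) / 2) ≤ h ^ ((p - 2) / 2) :=
          Real.rpow_le_rpow_of_nonpos hh0 (hflb s h1) (by linarith)
        have e3 : 0 ≤ h ^ ((p - 2) / 2) := Real.rpow_nonneg hh0.le _
        linarith [mul_le_mul_of_nonneg_left e1 hs0,
          mul_le_mul_of_nonneg_right (show s ≤ 2 * h by linarith) e3, hhe]
      · have e1 : chiTrunc χ h s ^ ((p - 2) / 2) ≤ (h + 1) ^ ((p - 2) / 2) :=
          Real.rpow_le_rpow (hfnn s hs0) (hfub s) (by linarith)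
        have e3 : 0 ≤ (h + 1) ^ ((p - 2) / 2) := Real.rpow_nonneg (by linarith) _
        linarith [mul_le_mul_of_nonneg_left e1 hs0,
          mul_le_mul_of_nonneg_right h2 e3, hh1e, hhp2]
    have fMb : ∀ s : ℝ, h ≤ s →
        p * chiTrunc χ h s ^ ((p - 2) / 2) ≤ 2 * h ^ (p / 2) := by
      intro s h1
      have hs0 : (0:ℝ) ≤ s := by linarith
      rcases le_total p 2 with hp2 | hp2
      · have e1 : chiTrunc χ h s ^ ((p - 2) / 2) ≤ h ^ ((p - 2) / 2) :=
          Real.rpow_le_rpow_of_nonpos hh0 (hflb s h1) (by linarith)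
        have e3 : 0 ≤ h ^ ((p - 2) / 2) := Real.rpow_nonneg hh0.le _
        linarith [mul_le_mul_of_nonneg_left e1 hp0.le,
          mul_le_mul_of_nonneg_right (show p ≤ 2 * h by linarith) e3, hhe]
      · have e1 : chiTrunc χ h s ^ ((p - 2) / 2) ≤ (h + 1) ^ ((p - 2) / 2) :=
          Real.rpow_le_rpow (hfnn s hs0) (hfub s) (by linarith)
        have e3 : 0 ≤ (h + 1) ^ ((p - 2) / 2) := Real.rpow_nonneg (by linarith) _
        linarith [mul_le_mul_of_nonneg_left e1 hp0.le,
          mul_le_mul_of_nonneg_right (show p ≤ h + 1 by linarith) e3, hh1e, hhp2]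
    have sgub : ∀ s : ℝ, h ≤ s →
        p * Real.sqrt (gg χ p h s) ≤ Real.sqrt (p - 1) * (2 * h ^ (p / 2)) := by
      intro s h1
      have e1 := sg_le s (by linarith)
      have e2 := fMb s h1
      linarith [mul_le_mul_of_nonneg_left e2 (Real.sqrt_nonneg (p - 1)),
        mul_le_mul_of_nonneg_left e1 hp0.le]
    have hBseg : ∀ x : ℝ, h ≤ x → auxB χ p h x
        = auxB χ p h h + ∫ s in h..x, Real.sqrt (gg χ p h s) := by
      intro x hx
      rw [auxB, auxB]
      exact (integral_add_adjacent_intervals (ig1 h hh0.le)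
        (ig1seg h x hh0 (lt_of_lt_of_le hh0 hx))).symm
    have e3h : p * auxB χ p h h = 2 * (Real.sqrt (p - 1) * h ^ (p / 2)) := by
      rw [Bval h hh0.le le_rfl]
      field_simp
    have keyA : ∀ x : ℝ, 0 < x →
        x * Real.sqrt (gg χ p h x) ≤ p * auxB χ p h x := by
      intro x hx
      rcases le_total x h with h1 | h1
      · rw [sg_eq x hx.le h1, Bval x hx.le h1]
        have hxx2 : x * (Real.sqrt (p - 1) * x ^ ((p - 2) / 2))
            = Real.sqrt (p - 1) * x ^ (p / 2) := by
          rw [show p / 2 = (p - 2) / 2 + 1 by ring, Real.rpow_add_one hx.ne']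
          ring
        have e1 : 0 ≤ Real.sqrt (p - 1) * x ^ (p / 2) :=
          mul_nonneg (Real.sqrt_nonneg _) (Real.rpow_nonneg hx.le _)
        have e2 : p * (2 / p * Real.sqrt (p - 1) * x ^ (p / 2))
            = 2 * (Real.sqrt (p - 1) * x ^ (p / 2)) := by
          field_simp
        calc x * (Real.sqrt (p - 1) * x ^ ((p - 2) / 2))
            = Real.sqrt (p - 1) * x ^ (p / 2) := hxx2
          _ ≤ 2 * (Real.sqrt (p - 1) * x ^ (p / 2)) := by linarith
          _ = p * (2 / p * Real.sqrt (p - 1) * x ^ (p / 2)) := e2.symm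
      · rcases le_total x (h + 1) with h2 | h2
        · have hBx : auxB χ p h h ≤ auxB χ p h x := by
            rw [hBseg x h1]
            have : 0 ≤ ∫ s in h..x, Real.sqrt (gg χ p h s) :=
              integral_nonneg h1 fun s _ => Real.sqrt_nonneg _
            linarith
          have e1 := sg_le x hx.le
          have e2 := fMa x h1 h2
          linarith [mul_le_mul_of_nonneg_left e1 hx.le,
            mul_le_mul_of_nonneg_left e2 (Real.sqrt_nonneg (p - 1)),
            mul_le_mul_of_nonneg_left hBx hp0.le, e3h]
        · have hg0 : gg χ p h x = 0 := by
            rw [gg, hχ0 _ (by linarith), mul_zero]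
          rw [hg0, Real.sqrt_zero, mul_zero]
          exact mul_nonneg hp0.le (hBnn x hx.le)
    have hBub : ∀ x : ℝ, h ≤ x → x ≤ h + 1 →
        p * auxB χ p h x ≤ 4 * (Real.sqrt (p - 1) * h ^ (p / 2)) := by
      intro x h1 h2
      have hseg : p * auxB χ p h x = p * auxB χ p h h
          + ∫ s in h..x, p * Real.sqrt (gg χ p h s) := by
        rw [hBseg x h1, intervalIntegral.integral_const_mul]
        ring
      have hintle : (∫ s in h..x, p * Real.sqrt (gg χ p h s))
          ≤ ∫ _ in h..x, Real.sqrt (p - 1) * (2 * h ^ (p / 2)) := by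
        apply integral_mono_on h1 ((ig1seg h x hh0 (by linarith)).const_mul p)
          intervalIntegrable_const
        intro s hs
        exact sgub s hs.1
      have hci : (∫ _ in h..x, Real.sqrt (p - 1) * (2 * h ^ (p / 2)))
          = (x - h) * (Real.sqrt (p - 1) * (2 * h ^ (p / 2))) := by
        rw [intervalIntegral.integral_const, smul_eq_mul]
      have hnn : 0 ≤ Real.sqrt (p - 1) * (2 * h ^ (p / 2)) :=
        mul_nonneg (Real.sqrt_nonneg _)
          (mul_nonneg (by norm_num) (Real.rpow_nonneg hh0.le _))
      linarith [mul_le_mul_of_nonneg_right (show x - h ≤ 1 by linarith) hnn,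
        hseg, hintle, hci, e3h]
    have keyB : ∀ x : ℝ, 0 < x →
        p * (auxB χ p h x * Real.sqrt (gg χ p h x))
          ≤ 4 * (p - 1) * chiTrunc χ h x ^ (p - 1) := by
      intro x hx
      have hss : Real.sqrt (p - 1) * Real.sqrt (p - 1) = p - 1 :=
        Real.mul_self_sqrt hp1.le
      rcases le_total x h with h1 | h1
      · rw [sg_eq x hx.le h1, Bval x hx.le h1, hfid x h1]
        have hxe : x ^ (p / 2) * x ^ ((p - 2) / 2) = x ^ (p - 1) := by
          rw [← Real.rpow_add hx]
          congr 1
          ring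
        have hid : p * (2 / p * Real.sqrt (p - 1) * x ^ (p / 2)
            * (Real.sqrt (p - 1) * x ^ ((p - 2) / 2)))
            = 2 * (p - 1) * x ^ (p - 1) := by
          rw [← hxe]
          field_simp
          linear_combination hss
        rw [hid]
        have := Real.rpow_nonneg hx.le (p - 1)
        nlinarith [this]
      · rcases le_total x (h + 1) with h2 | h2
        · have e1 := sg_le x hx.le
          have e2 := hBub x h1 h2
          have e4 : h ^ (p / 2) ≤ chiTrunc χ h x ^ (p / 2) :=
            Real.rpow_le_rpow hh0.le (hflb x h1) (by linarith)
          have e5 : chiTrunc χ h x ^ (p / 2) * chiTrunc χ h x ^ ((p - 2) / 2)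
              = chiTrunc χ h x ^ (p - 1) := by
            rw [← Real.rpow_add (hfpos x hx)]
            congr 1
            ring
          have hfs0 : 0 ≤ chiTrunc χ h x ^ ((p - 2) / 2) :=
            Real.rpow_nonneg (hfnn x hx.le) _
          have hss2 : 4 * (Real.sqrt (p - 1) * h ^ (p / 2))
              * (Real.sqrt (p - 1) * chiTrunc χ h x ^ ((p - 2) / 2))
              = 4 * (p - 1) * chiTrunc χ h x ^ ((p - 2) / 2) * h ^ (p / 2) := by
            linear_combination (4 * chiTrunc χ h x ^ ((p - 2) / 2) * h ^ (p / 2)) * hss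
          have hat0 : 0 ≤ 4 * (Real.sqrt (p - 1) * h ^ (p / 2)) :=
            mul_nonneg (by norm_num)
              (mul_nonneg (Real.sqrt_nonneg _) (Real.rpow_nonneg hh0.le _))
          have m1 := mul_le_mul_of_nonneg_right e2 (Real.sqrt_nonneg (gg χ p h x))
          have m2 := mul_le_mul_of_nonneg_left e1 hat0
          have m3 := mul_le_mul_of_nonneg_left e4
            (mul_nonneg (mul_nonneg (by norm_num : (0:ℝ) ≤ 4) hp1.le) hfs0 :
              0 ≤ 4 * (p - 1) * chiTrunc χ h x ^ ((p - 2) / 2))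
          calc p * (auxB χ p h x * Real.sqrt (gg χ p h x))
              = p * auxB χ p h x * Real.sqrt (gg χ p h x) := by ring
            _ ≤ 4 * (Real.sqrt (p - 1) * h ^ (p / 2)) * Real.sqrt (gg χ p h x) := m1
            _ ≤ 4 * (Real.sqrt (p - 1) * h ^ (p / 2))
                * (Real.sqrt (p - 1) * chiTrunc χ h x ^ ((p - 2) / 2)) := m2
            _ = 4 * (p - 1) * chiTrunc χ h x ^ ((p - 2) / 2) * h ^ (p / 2) := hss2
            _ ≤ 4 * (p - 1) * chiTrunc χ h x ^ ((p - 2) / 2)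
                * chiTrunc χ h x ^ (p / 2) := m3
            _ = 4 * (p - 1) * chiTrunc χ h x ^ (p - 1) := by
                rw [← e5]; ring
        · have hg0 : gg χ p h x = 0 := by
            rw [gg, hχ0 _ (by linarith), mul_zero]
          rw [hg0, Real.sqrt_zero]
          have hz : p * (auxB χ p h x * 0) = 0 := by ring
          rw [hz]
          exact mul_nonneg (by linarith) (Real.rpow_nonneg (hfnn x hx.le) _)
    -- the two monotonicity arguments
    have partA : ∀ u : ℝ, 0 ≤ u → UU χ p h u ≤ p / 2 * (auxB χ p h u * auxB χ p h u) := by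
      intro u hu
      have hcont : ContinuousOn
          (fun x => p / 2 * (auxB χ p h x * auxB χ p h x) - UU χ p h x) (Set.Icc 0 u) :=
        (continuousOn_const.mul ((hBc u hu).mul (hBc u hu))).sub (hUc u hu)
      have hder : ∀ x ∈ Set.Ioo (0:ℝ) u,
          HasDerivAt (fun x => p / 2 * (auxB χ p h x * auxB χ p h x) - UU χ p h x)
            ((fun x => p / 2 * (Real.sqrt (gg χ p h x) * auxB χ p h x
              + auxB χ p h x * Real.sqrt (gg χ p h x)) - x * gg χ p h x) x) x := by
        intro x hx
        exact (((hBd x hx.1).mul (hBd x hx.1)).const_mul (p / 2)).sub (hUd x hx.1)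
      have hnn : ∀ x ∈ Set.Ioo (0:ℝ) u,
          0 ≤ (fun x => p / 2 * (Real.sqrt (gg χ p h x) * auxB χ p h x
              + auxB χ p h x * Real.sqrt (gg χ p h x)) - x * gg χ p h x) x := by
        intro x hx
        beta_reduce
        have k := keyA x hx.1
        have hsq : Real.sqrt (gg χ p h x) * Real.sqrt (gg χ p h x) = gg χ p h x :=
          Real.mul_self_sqrt (hgnn x hx.1.le)
        nlinarith [mul_le_mul_of_nonneg_right k (Real.sqrt_nonneg (gg χ p h x)),
          Real.sqrt_nonneg (gg χ p h x), hx.1.le, hsq]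
      have hmm : p / 2 * (auxB χ p h 0 * auxB χ p h 0) - UU χ p h 0
          ≤ p / 2 * (auxB χ p h u * auxB χ p h u) - UU χ p h u :=
        mono_aux hu hcont hder hnn
      rw [hB0, hU0] at hmm
      linarith [hmm]
    have partB : ∀ u : ℝ, 0 ≤ u →
        p * (auxB χ p h u * auxB χ p h u) ≤ 8 * (p - 1) * phiTrunc χ p h u := by
      intro u hu
      have hcont : ContinuousOn
          (fun x => 8 * (p - 1) * phiTrunc χ p h x - p * (auxB χ p h x * auxB χ p h x))
          (Set.Icc 0 u) :=
        (continuousOn_const.mul hPc.continuousOn).sub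
          (continuousOn_const.mul ((hBc u hu).mul (hBc u hu)))
      have hder : ∀ x ∈ Set.Ioo (0:ℝ) u,
          HasDerivAt
            (fun x => 8 * (p - 1) * phiTrunc χ p h x - p * (auxB χ p h x * auxB χ p h x))
            ((fun x => 8 * (p - 1) * (chiTrunc χ h x ^ (p - 1))
              - p * (Real.sqrt (gg χ p h x) * auxB χ p h x
                + auxB χ p h x * Real.sqrt (gg χ p h x))) x) x := by
        intro x hx
        exact ((hPd x).const_mul (8 * (p - 1))).sub
          (((hBd x hx.1).mul (hBd x hx.1)).const_mul p)
      have hnn : ∀ x ∈ Set.Ioo (0:ℝ) u,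
          0 ≤ (fun x => 8 * (p - 1) * (chiTrunc χ h x ^ (p - 1))
              - p * (Real.sqrt (gg χ p h x) * auxB χ p h x
                + auxB χ p h x * Real.sqrt (gg χ p h x))) x := by
        intro x hx
        beta_reduce
        have k := keyB x hx.1
        linarith [k]
      have hmm : 8 * (p - 1) * phiTrunc χ p h 0 - p * (auxB χ p h 0 * auxB χ p h 0)
          ≤ 8 * (p - 1) * phiTrunc χ p h u - p * (auxB χ p h u * auxB χ p h u) :=
        mono_aux hu hcont hder hnn
      rw [hP0, hB0] at hmm
      linarith [hmm]
    intro u hu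
    constructor
    · rw [phiUnder_eq u hu, phiBar_eq u hu, pow_two]
      exact partA u hu
    · rw [phiBar_eq u hu, pow_two, div_mul_eq_mul_div, le_div_iff₀ hp0]
      nlinarith [partB u hu]
end
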